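/- arXiv:2103.06424 — 7 statements merged into one kernel-verified Lean document; each statement's English description precedes it below -/
import Mathlib

section
/- Let κ > 0 and δ > 0 with κδ < π/2. Then every complex number λ satisfying the characteristic equation λ + κ e^{−δλ} = 0 has strictly negative real part. -/
/-! If `Re z ≥ 0` then `|z| = κ e^{-δ Re z} ≤ κ`, so `|δ Im z| ≤ κδ < π/2` and
`cos (δ Im z) > 0`. Taking real parts in `z = -κ e^{-δz}` then gives
`Re z = -κ e^{-δ Re z} cos (δ Im z) < 0`. -/

namespace DelayCharacteristic

variable {κ δ : ℝ} {z : ℂ}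

theorem norm_eq (hκ : 0 ≤ κ) (hz : z + κ * Complex.exp (-δ * z) = 0) :
    ‖z‖ = κ * Real.exp (-δ * z.re) := by
  calc ‖z‖ = ‖(κ : ℂ) * Complex.exp (-δ * z)‖ := by
        rw [← norm_neg, ← eq_neg_of_add_eq_zero_right hz]
    _ = κ * Real.exp (-δ * z.re) := by simp [Complex.norm_exp, abs_of_nonneg hκ]

theorem re_eq (hz : z + κ * Complex.exp (-δ * z) = 0) :
    z.re = -(κ * (Real.exp (-δ * z.re) * Real.cos (δ * z.im))) := by
  have := congrArg Complex.re (eq_neg_of_add_eq_zero_left hz)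
  simpa [Complex.exp_re, Complex.mul_re] using this

theorem abs_im_le (hκ : 0 ≤ κ) (hδ : 0 ≤ δ) (hre : 0 ≤ z.re)
    (hz : z + κ * Complex.exp (-δ * z) = 0) : |z.im| ≤ κ :=
  calc |z.im| ≤ ‖z‖ := Complex.abs_im_le_norm z
    _ = κ * Real.exp (-δ * z.re) := norm_eq hκ hz
    _ ≤ κ * 1 := by gcongr; exact Real.exp_le_one_iff.mpr (by nlinarith)
    _ = κ := mul_one κ

end DelayCharacteristic

open DelayCharacteristic in
/-- **Stability of the delayed replicator dynamics.**
If `κ > 0`, `δ > 0` and `κδ < π/2`, then every complex root `z` of the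
characteristic equation `z + κ e^{−δz} = 0` has strictly negative real part. -/
theorem stmt_2 (κ δ : ℝ) (hκ : 0 < κ) (hδ : 0 < δ) (h : κ * δ < Real.pi / 2) :
    ∀ z : ℂ, z + (κ : ℂ) * Complex.exp (-(δ : ℂ) * z) = 0 → z.re < 0 := by
  intro z hz
  by_contra! hre
  have hcos : 0 < Real.cos (δ * z.im) := by
    refine Real.cos_pos_of_mem_Ioo (abs_lt.mp ?_)
    calc |δ * z.im| = δ * |z.im| := by rw [abs_mul, abs_of_pos hδ]
      _ ≤ δ * κ := by gcongr; exact abs_im_le hκ.le hδ.le hre hz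
      _ < Real.pi / 2 := by linarith
  have hpos := mul_pos hκ (mul_pos (Real.exp_pos (-δ * z.re)) hcos)
  linarith [re_eq hz]
end

section
/- Let κ > 0 and δ > 0 with κδ > π/2. Then there exists a complex number λ with strictly positive real part satisfying the characteristic equation λ + κ e^{−δλ} = 0. -/
/-!
Rescaling `w = δλ` turns the equation into `w + a e^{-w} = 0`, i.e. `w e^w = -a`, with
`a = κδ`. On the curve `w(y) = -y cot y + i y` the number `w e^w = -(y / sin y) e^{-y cot y}` is
real and negative. For `y ∈ (π/2, π)` the real part `-y cot y` is positive, and the modulus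
`(y / sin y) e^{-y cot y}` equals `π/2` at `y = π/2` and blows up as `y → π`, so by the
intermediate value theorem it takes every value `a > π/2`.
-/

open Real Set

noncomputable def lambertCurve (y : ℝ) : ℂ := ⟨-(y * cos y / sin y), y⟩

noncomputable def lambertModulus (y : ℝ) : ℝ := y / sin y * exp (-(y * cos y / sin y))

lemma lambertCurve_mul_exp {y : ℝ} (hy : sin y ≠ 0) :
    lambertCurve y * Complex.exp (lambertCurve y) = -(lambertModulus y : ℂ) := by
  have hw : lambertCurve y = ((-(y * cos y / sin y) : ℝ) : ℂ) + (y : ℂ) * Complex.I :=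
    (Complex.re_add_im _).symm
  rw [hw, Complex.exp_add, Complex.exp_mul_I, ← Complex.ofReal_exp, ← Complex.ofReal_cos,
    ← Complex.ofReal_sin]
  apply Complex.ext
  · simp only [lambertModulus, Complex.mul_re, Complex.add_re, Complex.add_im, Complex.mul_im,
      Complex.ofReal_re, Complex.ofReal_im, Complex.I_re, Complex.I_im, Complex.neg_re]
    field_simp
    linear_combination (-(y * exp (-(y * cos y / sin y)))) * sin_sq_add_cos_sq y
  · simp only [lambertModulus, Complex.mul_re, Complex.add_re, Complex.add_im, Complex.mul_im,
      Complex.ofReal_re, Complex.ofReal_im, Complex.I_re, Complex.I_im, Complex.neg_im]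
    field_simp
    ring

lemma lambertCurve_re_pos {y : ℝ} (hy : y ∈ Ioo (π / 2) π) : 0 < (lambertCurve y).re := by
  have hsin : 0 < sin y := sin_pos_of_pos_of_lt_pi (by linarith [pi_pos, hy.1]) hy.2
  have hcos : cos y < 0 := cos_neg_of_pi_div_two_lt_of_lt hy.1 (by linarith [pi_pos, hy.2])
  have hy0 : 0 < y := by linarith [pi_pos, hy.1]
  exact neg_pos.mpr (div_neg_of_neg_of_pos (by nlinarith) hsin)

lemma continuousOn_lambertModulus : ContinuousOn lambertModulus {y | sin y ≠ 0} := by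
  unfold lambertModulus
  have hcot : ContinuousOn (fun y => -(y * cos y / sin y)) {y | sin y ≠ 0} :=
    ((by fun_prop : Continuous fun y => y * cos y).continuousOn.div
      continuous_sin.continuousOn fun _ hy => hy).neg
  exact (continuous_id.continuousOn.div continuous_sin.continuousOn fun _ hy => hy).mul
    (continuous_exp.comp_continuousOn hcot)

lemma lambertModulus_pi_div_two : lambertModulus (π / 2) = π / 2 := by
  simp [lambertModulus]

lemma div_sin_le_lambertModulus {y : ℝ} (hy : y ∈ Icc (π / 2) π) (hsin : 0 < sin y) :
    y / sin y ≤ lambertModulus y := by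
  have hcos : cos y ≤ 0 := cos_nonpos_of_pi_div_two_le_of_le hy.1 (by linarith [pi_pos, hy.2])
  have hy0 : 0 ≤ y := by linarith [pi_pos, hy.1]
  have hexp : 1 ≤ exp (-(y * cos y / sin y)) :=
    one_le_exp (neg_nonneg.mpr (div_nonpos_of_nonpos_of_nonneg (by nlinarith) hsin.le))
  unfold lambertModulus
  exact le_mul_of_one_le_right (div_nonneg hy0 hsin.le) hexp

lemma exists_lambertModulus_eq {a : ℝ} (ha : π / 2 < a) :
    ∃ y ∈ Ioo (π / 2) π, lambertModulus y = a := by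
  have hε : 0 < π / (2 * a) := div_pos pi_pos (by linarith [pi_pos])
  have hε1 : π / (2 * a) < 1 := by rw [div_lt_one (by linarith [pi_pos])]; linarith
  set b := π - π / (2 * a)
  have hb : π / 2 < b := by linarith [pi_gt_three]
  have hsin_pos : ∀ y ∈ Icc (π / 2) b, 0 < sin y := fun y hy =>
    sin_pos_of_pos_of_lt_pi (by linarith [pi_pos, hy.1]) (by linarith [hy.2])
  -- `sin b = sin (π/(2a)) ≤ π/(2a)` forces the modulus at `b` above `a`.
  have hb_ge : a ≤ lambertModulus b := by
    have hsinb : sin b ≤ π / (2 * a) := by rw [sin_pi_sub]; exact sin_le hε.le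
    have hsb := hsin_pos b ⟨hb.le, le_rfl⟩
    calc a = (π / 2) / (π / (2 * a)) := by field_simp
      _ ≤ b / sin b := div_le_div₀ (by linarith) hb.le hsb hsinb
      _ ≤ lambertModulus b := div_sin_le_lambertModulus ⟨hb.le, by linarith⟩ hsb
  obtain ⟨y, hy, hya⟩ := intermediate_value_Icc hb.le
    (continuousOn_lambertModulus.mono fun y hy => (hsin_pos y hy).ne')
    ⟨(lambertModulus_pi_div_two ▸ ha).le, hb_ge⟩
  have hy_ne : y ≠ π / 2 := by rintro rfl; rw [lambertModulus_pi_div_two] at hya; linarith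
  exact ⟨y, ⟨lt_of_le_of_ne hy.1 hy_ne.symm, by linarith [hy.2]⟩, hya⟩

lemma exists_re_pos_add_mul_exp_neg_eq_zero {a : ℝ} (ha : π / 2 < a) :
    ∃ w : ℂ, 0 < w.re ∧ w + a * Complex.exp (-w) = 0 := by
  obtain ⟨y, hy, hya⟩ := exists_lambertModulus_eq ha
  have hsin : sin y ≠ 0 := (sin_pos_of_pos_of_lt_pi (by linarith [pi_pos, hy.1]) hy.2).ne'
  refine ⟨lambertCurve y, lambertCurve_re_pos hy, ?_⟩
  have key := lambertCurve_mul_exp hsin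
  rw [hya] at key
  have hexp : Complex.exp (lambertCurve y) * Complex.exp (-lambertCurve y) = 1 := by
    rw [← Complex.exp_add, add_neg_cancel, Complex.exp_zero]
  linear_combination Complex.exp (-lambertCurve y) * key - lambertCurve y * hexp

theorem stmt_4_general (κ δ : ℝ) (hδ : 0 < δ) (h : Real.pi / 2 < κ * δ) :
    ∃ z : ℂ, 0 < z.re ∧ z + (κ : ℂ) * Complex.exp (-(δ : ℂ) * z) = 0 := by
  obtain ⟨w, hw_re, hw⟩ := exists_re_pos_add_mul_exp_neg_eq_zero h
  have hδ' : (δ : ℂ) ≠ 0 := Complex.ofReal_ne_zero.mpr hδ.ne'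
  refine ⟨w / δ, by rw [Complex.div_ofReal_re]; exact div_pos hw_re hδ, ?_⟩
  rw [neg_mul, mul_div_cancel₀ w hδ']
  push_cast at hw
  field_simp
  linear_combination hw

/-- **Instability beyond the threshold `δ* = π/(2κ)`.**
If `κ > 0`, `δ > 0` and `κδ > π/2`, then the characteristic equation
`λ + κ e^{−δλ} = 0` has a root with strictly positive real part. -/
theorem stmt_4 (κ δ : ℝ) (hκ : 0 < κ) (hδ : 0 < δ) (h : Real.pi / 2 < κ * δ) :
    ∃ z : ℂ, 0 < z.re ∧ z + (κ : ℂ) * Complex.exp (-(δ : ℂ) * z) = 0 :=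
  stmt_4_general κ δ hδ h
end

section
/- Let β > 0, μ > 0, T > 0, and let f : [0,T] → ℝ be a nonnegative integrable function. Then ∫₀ᵀ e^{−μt} (I^β f)(t) dt ≤ μ^{−β} ∫₀ᵀ e^{−μt} f(t) dt. -/
/-!
Work in `ℝ≥0∞`, where Tonelli needs no integrability hypotheses. By Tonelli and the translation
invariance of Lebesgue measure, the `e^{-μt}`-weighted integral of a convolution
`k ⋆ g` factorizes as the product of the weighted integrals of `k` and `g`, and for
`k u = u^{β-1}` (`u ≥ 0`) the first factor is `μ^{-β} Γ(β)`. Restricting the outer integral to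
`(0, T]` only decreases it, and a real integral is always bounded by the Lebesgue integral of
its positive part, which takes care of inner integrals that are junk because the integrand is
not integrable.
-/

open MeasureTheory Set ENNReal

theorem ofReal_integral_le_lintegral_ofReal {α : Type*} [MeasurableSpace α] {μ : Measure α}
    (F : α → ℝ) : ENNReal.ofReal (∫ x, F x ∂μ) ≤ ∫⁻ x, ENNReal.ofReal (F x) ∂μ := by
  by_cases hF : Integrable F μ
  · rw [integral_eq_lintegral_pos_part_sub_lintegral_neg_part hF]
    exact (ENNReal.ofReal_le_ofReal (sub_le_self _ toReal_nonneg)).trans ofReal_toReal_le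
  · simp [integral_undef hF]

theorem lintegral_exp_mul_lintegral_conv (μ : ℝ) {k g : ℝ → ℝ≥0∞}
    (hk : Measurable k) (hg : Measurable g) :
    ∫⁻ t, ENNReal.ofReal (Real.exp (-μ * t)) * ∫⁻ s, k (t - s) * g s
      = (∫⁻ u, ENNReal.ofReal (Real.exp (-μ * u)) * k u) *
          ∫⁻ s, ENNReal.ofReal (Real.exp (-μ * s)) * g s := by
  have hshift : ∀ s, ∫⁻ t, ENNReal.ofReal (Real.exp (-μ * t)) * k (t - s)
      = ENNReal.ofReal (Real.exp (-μ * s)) *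
          ∫⁻ u, ENNReal.ofReal (Real.exp (-μ * u)) * k u := by
    intro s
    rw [← lintegral_add_right_eq_self _ s, ← lintegral_const_mul' _ _ ofReal_ne_top]
    refine lintegral_congr fun u => ?_
    rw [add_sub_cancel_right, mul_add, Real.exp_add, ENNReal.ofReal_mul (Real.exp_nonneg _)]
    ring
  calc ∫⁻ t, ENNReal.ofReal (Real.exp (-μ * t)) * ∫⁻ s, k (t - s) * g s
      = ∫⁻ t, ∫⁻ s, ENNReal.ofReal (Real.exp (-μ * t)) * k (t - s) * g s := by
        refine lintegral_congr fun t => ?_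
        rw [← lintegral_const_mul' _ _ ofReal_ne_top]
        simp only [mul_assoc]
    _ = ∫⁻ s, ∫⁻ t, ENNReal.ofReal (Real.exp (-μ * t)) * k (t - s) * g s :=
        lintegral_lintegral_swap (by fun_prop)
    _ = ∫⁻ s, (∫⁻ t, ENNReal.ofReal (Real.exp (-μ * t)) * k (t - s)) * g s := by
        refine lintegral_congr fun s => ?_
        rw [lintegral_mul_const _ (by fun_prop)]
    _ = _ := by
        simp only [hshift]
        rw [← lintegral_const_mul _ (by fun_prop)]
        exact lintegral_congr fun s => by ring

noncomputable def riemannLiouvilleKernel (β : ℝ) : ℝ → ℝ≥0∞ :=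
  (Ici 0).indicator fun u => ENNReal.ofReal (u ^ (β - 1))

theorem measurable_riemannLiouvilleKernel (β : ℝ) : Measurable (riemannLiouvilleKernel β) :=
  (by fun_prop : Measurable fun u : ℝ => ENNReal.ofReal (u ^ (β - 1))).indicator measurableSet_Ici

theorem lintegral_exp_mul_riemannLiouvilleKernel {β μ : ℝ} (hβ : 0 < β) (hμ : 0 < μ) :
    ∫⁻ u, ENNReal.ofReal (Real.exp (-μ * u)) * riemannLiouvilleKernel β u
      = ENNReal.ofReal (μ ^ (-β) * Real.Gamma β) := by
  have hint : IntegrableOn (fun u : ℝ => u ^ (β - 1) * Real.exp (-(μ * u))) (Ioi 0) := by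
    simpa using integrableOn_rpow_mul_exp_neg_mul_rpow (by linarith : (-1 : ℝ) < β - 1) one_pos hμ
  have hnonneg : 0 ≤ᵐ[volume.restrict (Ioi 0)] fun u : ℝ => u ^ (β - 1) * Real.exp (-(μ * u)) :=
    ae_restrict_of_forall_mem measurableSet_Ioi fun u hu =>
      mul_nonneg (Real.rpow_nonneg (le_of_lt hu) _) (Real.exp_nonneg _)
  calc ∫⁻ u, ENNReal.ofReal (Real.exp (-μ * u)) * riemannLiouvilleKernel β u
      = ∫⁻ u in Ioi 0, ENNReal.ofReal (u ^ (β - 1) * Real.exp (-(μ * u))) := by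
        rw [setLIntegral_congr Ioi_ae_eq_Ici, ← lintegral_indicator measurableSet_Ici]
        refine lintegral_congr fun u => ?_
        by_cases hu : u ∈ Ici (0 : ℝ)
        · simp only [riemannLiouvilleKernel, indicator_of_mem hu]
          rw [← ENNReal.ofReal_mul (Real.exp_nonneg _), mul_comm, neg_mul]
        · simp [riemannLiouvilleKernel, indicator_of_notMem hu]
    _ = ENNReal.ofReal (μ ^ (-β) * Real.Gamma β) := by
        rw [← ofReal_integral_eq_lintegral_ofReal hint hnonneg,
          Real.integral_rpow_mul_exp_neg_mul_Ioi hβ hμ, one_div, Real.inv_rpow hμ.le,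
          Real.rpow_neg hμ.le]

theorem setLIntegral_Ioc_rpow_mul_eq_lintegral_riemannLiouvilleKernel (β : ℝ) {t T : ℝ}
    (ht : t ≤ T) (g : ℝ → ℝ≥0∞) :
    ∫⁻ s in Ioc 0 t, ENNReal.ofReal ((t - s) ^ (β - 1)) * g s
      = ∫⁻ s, riemannLiouvilleKernel β (t - s) * (Ioc 0 T).indicator g s := by
  rw [← lintegral_indicator measurableSet_Ioc]
  refine lintegral_congr fun s => ?_
  by_cases hs : s ∈ Ioc 0 t
  · have hsT : s ∈ Ioc 0 T := ⟨hs.1, hs.2.trans ht⟩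
    have hts : t - s ∈ Ici 0 := sub_nonneg.2 hs.2
    simp only [riemannLiouvilleKernel, indicator_of_mem hs, indicator_of_mem hsT,
      indicator_of_mem hts]
  · rw [indicator_of_notMem hs]
    rcases not_and_or.1 hs with hs0 | hst
    · rw [indicator_of_notMem fun h => hs0 h.1, mul_zero]
    · rw [riemannLiouvilleKernel, indicator_of_notMem (by simpa using hst), zero_mul]

section AEEqOfReal

variable {T : ℝ} {f : ℝ → ℝ} {g : ℝ → ℝ≥0∞}

theorem ofReal_intervalIntegral_rpow_mul_le
    (hfg : (fun s => ENNReal.ofReal (f s)) =ᵐ[volume.restrict (Icc 0 T)] g)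
    (β : ℝ) {t : ℝ} (ht : t ∈ Ioc 0 T) :
    ENNReal.ofReal (∫ s in (0:ℝ)..t, (t - s) ^ (β - 1) * f s)
      ≤ ∫⁻ s, riemannLiouvilleKernel β (t - s) * (Ioc 0 T).indicator g s := by
  rw [intervalIntegral.integral_of_le ht.1.le,
    ← setLIntegral_Ioc_rpow_mul_eq_lintegral_riemannLiouvilleKernel β ht.2]
  refine (ofReal_integral_le_lintegral_ofReal _).trans_eq (lintegral_congr_ae ?_)
  filter_upwards [ae_restrict_mem measurableSet_Ioc,
    ae_restrict_of_ae_restrict_of_subset (Ioc_subset_Icc_self.trans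
      (Icc_subset_Icc_right ht.2)) hfg] with s hs hfs
  rw [ENNReal.ofReal_mul (Real.rpow_nonneg (sub_nonneg.2 hs.2) _), hfs]

theorem ofReal_intervalIntegral_exp_mul_le
    (hfg : (fun s => ENNReal.ofReal (f s)) =ᵐ[volume.restrict (Icc 0 T)] g)
    (β μ : ℝ) (hT : 0 ≤ T) {c : ℝ} (hc : 0 ≤ c) :
    ENNReal.ofReal (∫ t in (0:ℝ)..T, Real.exp (-μ * t) *
        (c * ∫ s in (0:ℝ)..t, (t - s) ^ (β - 1) * f s))
      ≤ ENNReal.ofReal c * ∫⁻ t, ENNReal.ofReal (Real.exp (-μ * t)) *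
          ∫⁻ s, riemannLiouvilleKernel β (t - s) * (Ioc 0 T).indicator g s := by
  rw [intervalIntegral.integral_of_le hT, ← lintegral_const_mul' _ _ ofReal_ne_top]
  refine (ofReal_integral_le_lintegral_ofReal _).trans
    ((setLIntegral_mono' measurableSet_Ioc fun t ht => ?_).trans (setLIntegral_le_lintegral _ _))
  rw [ENNReal.ofReal_mul (Real.exp_nonneg _), ENNReal.ofReal_mul hc, mul_left_comm]
  gcongr
  exact ofReal_intervalIntegral_rpow_mul_le hfg β ht

theorem lintegral_exp_mul_indicator_eq_ofReal_intervalIntegral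
    (hfg : (fun s => ENNReal.ofReal (f s)) =ᵐ[volume.restrict (Icc 0 T)] g) (μ : ℝ) (hT : 0 ≤ T)
    (hf_nonneg : ∀ t ∈ Icc 0 T, 0 ≤ f t) (hf_int : IntegrableOn f (Icc 0 T)) :
    ∫⁻ s, ENNReal.ofReal (Real.exp (-μ * s)) * (Ioc 0 T).indicator g s
      = ENNReal.ofReal (∫ t in (0:ℝ)..T, Real.exp (-μ * t) * f t) := by
  have hint : IntegrableOn (fun t => Real.exp (-μ * t) * f t) (Ioc 0 T) :=
    (hf_int.continuousOn_mul (by fun_prop) isCompact_Icc).mono_set Ioc_subset_Icc_self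
  calc ∫⁻ s, ENNReal.ofReal (Real.exp (-μ * s)) * (Ioc 0 T).indicator g s
      = ∫⁻ s in Ioc 0 T, ENNReal.ofReal (Real.exp (-μ * s)) * g s := by
        rw [← lintegral_indicator measurableSet_Ioc]
        simp only [indicator_mul_right]
    _ = ∫⁻ s in Ioc 0 T, ENNReal.ofReal (Real.exp (-μ * s) * f s) := by
        refine lintegral_congr_ae ?_
        filter_upwards [ae_restrict_of_ae_restrict_of_subset Ioc_subset_Icc_self hfg] with s hs
        rw [ENNReal.ofReal_mul (Real.exp_nonneg _), hs]
    _ = _ := by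
        rw [intervalIntegral.integral_of_le hT, ofReal_integral_eq_lintegral_ofReal hint
          (ae_restrict_of_forall_mem measurableSet_Ioc fun t ht =>
            mul_nonneg (Real.exp_nonneg _) (hf_nonneg t (Ioc_subset_Icc_self ht)))]

end AEEqOfReal

/-- **Weighted-norm bound for the Riemann–Liouville fractional integral.**
For `β > 0`, `μ > 0`, `T > 0` and a nonnegative integrable `f : [0,T] → ℝ`,
`∫₀ᵀ e^{−μt} (I^β f)(t) dt ≤ μ^{−β} ∫₀ᵀ e^{−μt} f(t) dt`, where
`(I^β f)(t) = (1/Γ(β)) ∫₀ᵗ (t−s)^{β−1} f(s) ds`. -/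
theorem stmt_5 (β μ T : ℝ) (hβ : 0 < β) (hμ : 0 < μ) (hT : 0 < T)
    (f : ℝ → ℝ)
    (hf_nonneg : ∀ t ∈ Set.Icc (0:ℝ) T, 0 ≤ f t)
    (hf_int : MeasureTheory.IntegrableOn f (Set.Icc (0:ℝ) T)) :
    (∫ t in (0:ℝ)..T, Real.exp (-μ * t) *
        ((1 / Real.Gamma β) * ∫ s in (0:ℝ)..t, (t - s) ^ (β - 1) * f s))
      ≤ μ ^ (-β) * ∫ t in (0:ℝ)..T, Real.exp (-μ * t) * f t := by
  have hΓ : 0 < Real.Gamma β := Real.Gamma_pos_of_pos hβ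
  obtain ⟨g, hg, hfg⟩ : ∃ g : ℝ → ℝ≥0∞, Measurable g ∧
      (fun s => ENNReal.ofReal (f s)) =ᵐ[volume.restrict (Icc 0 T)] g :=
    ⟨_, hf_int.1.aemeasurable.ennreal_ofReal.measurable_mk,
      hf_int.1.aemeasurable.ennreal_ofReal.ae_eq_mk⟩
  have hR : 0 ≤ ∫ t in (0:ℝ)..T, Real.exp (-μ * t) * f t :=
    intervalIntegral.integral_nonneg hT.le fun t ht =>
      mul_nonneg (Real.exp_nonneg _) (hf_nonneg t ht)
  have key := ofReal_intervalIntegral_exp_mul_le hfg β μ hT.le (one_div_nonneg.2 hΓ.le)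
  rw [lintegral_exp_mul_lintegral_conv μ (measurable_riemannLiouvilleKernel β)
      (hg.indicator measurableSet_Ioc), lintegral_exp_mul_riemannLiouvilleKernel hβ hμ,
    lintegral_exp_mul_indicator_eq_ofReal_intervalIntegral hfg μ hT.le hf_nonneg hf_int,
    ← ENNReal.ofReal_mul (by positivity), ← ENNReal.ofReal_mul (by positivity),
    ENNReal.ofReal_le_ofReal_iff (by positivity)] at key
  refine key.trans_eq ?_
  field_simp
end

section
/- Let n ∈ ℕ, β > 0, μ > 0, T > 0, P⁰ ∈ ℝⁿ, and let E : ℝⁿ → ℝⁿ satisfy ‖E(x) − E(y)‖₁ ≤ L ‖x − y‖₁ for all x, y ∈ ℝⁿ, where ‖·‖₁ is the ℓ¹ norm on ℝⁿ. Define the operator Λ on continuous functions P : [0,T] → ℝⁿ by (ΛP)(t) = P⁰ + (1/Γ(β)) ∫₀ᵗ (t−s)^{β−1} E(P(s)) ds. Then for all continuous P, Q : [0,T] → ℝⁿ, ∫₀ᵀ e^{−μt} ‖(ΛP)(t) − (ΛQ)(t)‖₁ dt ≤ (L/μ^β) ∫₀ᵀ e^{−μt} ‖P(t) − Q(t)‖₁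 dt. In particular, if L < μ^β then Λ is a contraction with respect to the weighted norm ‖z‖_T = ∫₀ᵀ e^{−μt} ‖z(t)‖₁ dt. -/
/-
Write `d(s) = ‖P(s) - Q(s)‖₁`. The Lipschitz bound gives, pointwise,
`‖(ΛP)(t) - (ΛQ)(t)‖₁ ≤ (L / Γ(β)) ∫₀ᵗ (t - s)^(β-1) d(s) ds`. Multiply by `e^(-μt)`, integrate
over `[0, T]` and swap the order of integration (Tonelli, carried out in `ℝ≥0∞` so that no
integrability has to be checked). Since `e^(-μt) = e^(-μs) e^(-μ(t-s))`, the inner integral is at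
most `e^(-μs) ∫₀^∞ e^(-μu) u^(β-1) du = e^(-μs) Γ(β) / μ^β`, and the `Γ(β)` cancels.
-/

open MeasureTheory Set Real
open scoped ENNReal

theorem lintegral_exp_neg_mul_mul_comp_sub (μ s : ℝ) (k : ℝ → ℝ≥0∞) :
    ∫⁻ t, ENNReal.ofReal (exp (-μ * t)) * k (t - s)
      = ENNReal.ofReal (exp (-μ * s)) * ∫⁻ u, ENNReal.ofReal (exp (-μ * u)) * k u := by
  rw [← lintegral_add_right_eq_self _ s, ← lintegral_const_mul' _ _ ENNReal.ofReal_ne_top]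
  refine lintegral_congr fun u => ?_
  rw [add_sub_cancel_right, ← mul_assoc, ← ENNReal.ofReal_mul (exp_nonneg _), ← exp_add]
  ring_nf

theorem lintegral_exp_neg_mul_mul_lintegral_le (μ : ℝ) (S : Set ℝ) {k g : ℝ → ℝ≥0∞}
    (hk : Measurable k) (hg : AEMeasurable g (volume.restrict S)) :
    ∫⁻ t in S, ENNReal.ofReal (exp (-μ * t)) * ∫⁻ s in S, k (t - s) * g s
      ≤ (∫⁻ u, ENNReal.ofReal (exp (-μ * u)) * k u)
        * ∫⁻ s in S, ENNReal.ofReal (exp (-μ * s)) * g s := by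
  have hw : Measurable fun t : ℝ => ENNReal.ofReal (exp (-μ * t)) := by fun_prop
  calc ∫⁻ t in S, ENNReal.ofReal (exp (-μ * t)) * ∫⁻ s in S, k (t - s) * g s
      = ∫⁻ t in S, ∫⁻ s in S, ENNReal.ofReal (exp (-μ * t)) * k (t - s) * g s := by
        refine lintegral_congr fun t => ?_
        rw [← lintegral_const_mul' _ _ ENNReal.ofReal_ne_top]
        simp only [mul_assoc]
    _ = ∫⁻ s in S, ∫⁻ t in S, ENNReal.ofReal (exp (-μ * t)) * k (t - s) * g s :=
        lintegral_lintegral_swap <| ((hw.comp measurable_fst).mul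
          (hk.comp (measurable_fst.sub measurable_snd))).aemeasurable.mul hg.comp_snd
    _ ≤ ∫⁻ s in S, (∫⁻ t, ENNReal.ofReal (exp (-μ * t)) * k (t - s)) * g s :=
        lintegral_mono fun s => (setLIntegral_le_lintegral _ _).trans_eq
          (lintegral_mul_const _ (by fun_prop))
    _ = _ := by
        simp_rw [lintegral_exp_neg_mul_mul_comp_sub, mul_assoc, mul_left_comm (ENNReal.ofReal _)]
        exact lintegral_const_mul'' _ (hw.aemeasurable.mul hg)

theorem lintegral_exp_neg_mul_mul_rpow_indicator {β μ : ℝ} (hβ : 0 < β) (hμ : 0 < μ) :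
    ∫⁻ u, ENNReal.ofReal (exp (-μ * u))
        * (Ici 0).indicator (fun u => ENNReal.ofReal (u ^ (β - 1))) u
      = ENNReal.ofReal (Gamma β / μ ^ β) := by
  have hint : IntegrableOn (fun u : ℝ => u ^ (β - 1) * exp (-(μ * u))) (Ioi 0) := by
    simpa [neg_mul] using
      integrableOn_rpow_mul_exp_neg_mul_rpow (p := 1) (by linarith) one_pos hμ
  have hnn : 0 ≤ᵐ[volume.restrict (Ioi 0)] fun u : ℝ => u ^ (β - 1) * exp (-(μ * u)) :=
    (ae_restrict_iff' measurableSet_Ioi).2 <| ae_of_all _ fun u hu =>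
      mul_nonneg (rpow_nonneg (le_of_lt hu) _) (exp_nonneg _)
  simp_rw [← indicator_mul_right (Ici 0) (fun u => ENNReal.ofReal (exp (-μ * u)))]
  rw [lintegral_indicator measurableSet_Ici, setLIntegral_congr Ioi_ae_eq_Ici.symm]
  calc ∫⁻ u in Ioi 0, ENNReal.ofReal (exp (-μ * u)) * ENNReal.ofReal (u ^ (β - 1))
      = ∫⁻ u in Ioi 0, ENNReal.ofReal (u ^ (β - 1) * exp (-(μ * u))) :=
        lintegral_congr fun u => by rw [← ENNReal.ofReal_mul (exp_nonneg _), mul_comm, neg_mul]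
    _ = ENNReal.ofReal (∫ u in Ioi 0, u ^ (β - 1) * exp (-(μ * u))) :=
        (ofReal_integral_eq_lintegral_ofReal hint hnn).symm
    _ = _ := by
        rw [integral_rpow_mul_exp_neg_mul_Ioi hβ hμ, one_div, inv_rpow hμ.le, inv_mul_eq_div]

theorem lintegral_exp_neg_mul_mul_lintegral_rpow_le {β μ : ℝ} (hβ : 0 < β) (hμ : 0 < μ)
    (a b : ℝ) {g : ℝ → ℝ≥0∞} (hg : AEMeasurable g (volume.restrict (Ioc a b))) :
    ∫⁻ t in Ioc a b, ENNReal.ofReal (exp (-μ * t))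
        * ∫⁻ s in Ioc a t, ENNReal.ofReal ((t - s) ^ (β - 1)) * g s
      ≤ ENNReal.ofReal (Gamma β / μ ^ β)
        * ∫⁻ s in Ioc a b, ENNReal.ofReal (exp (-μ * s)) * g s := by
  -- Extended by zero to negative arguments, the kernel turns the Volterra integral into a
  -- convolution over the fixed set `Ioc a b`.
  set k := (Ici (0 : ℝ)).indicator fun u => ENNReal.ofReal (u ^ (β - 1))
  have hk : Measurable k :=
    (by fun_prop : Measurable fun u : ℝ => ENNReal.ofReal (u ^ (β - 1))).indicator
      measurableSet_Ici
  calc _ ≤ ∫⁻ t in Ioc a b, ENNReal.ofReal (exp (-μ * t))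
        * ∫⁻ s in Ioc a b, k (t - s) * g s := by
        refine setLIntegral_mono' measurableSet_Ioc fun t ht => mul_le_mul_right ?_ _
        calc ∫⁻ s in Ioc a t, ENNReal.ofReal ((t - s) ^ (β - 1)) * g s
            = ∫⁻ s in Ioc a t, k (t - s) * g s :=
              setLIntegral_congr_fun measurableSet_Ioc fun s hs => by
                simp [k, indicator_of_mem (show t - s ∈ Ici 0 from sub_nonneg.2 hs.2)]
          _ ≤ _ := lintegral_mono_set (Ioc_subset_Ioc_right ht.2)
    _ ≤ _ := lintegral_exp_neg_mul_mul_lintegral_le μ _ hk hg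
    _ = _ := by rw [lintegral_exp_neg_mul_mul_rpow_indicator hβ hμ]

theorem integral_exp_neg_mul_le_of_enorm_le_lintegral_rpow {β μ T : ℝ} (hβ : 0 < β)
    (hμ : 0 < μ) (hT : 0 ≤ T) {F G : ℝ → ℝ} (hG : ContinuousOn G (Icc 0 T))
    (hG₀ : ∀ t ∈ Icc 0 T, 0 ≤ G t)
    (hFG : ∀ t ∈ Ioc 0 T, ‖F t‖ₑ ≤ ENNReal.ofReal (1 / Gamma β)
      * ∫⁻ s in Ioc 0 t, ENNReal.ofReal ((t - s) ^ (β - 1)) * ENNReal.ofReal (G s)) :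
    ∫ t in 0..T, exp (-μ * t) * F t ≤ 1 / μ ^ β * ∫ t in 0..T, exp (-μ * t) * G t := by
  have hwG₀ : ∀ t ∈ Ioc 0 T, 0 ≤ exp (-μ * t) * G t :=
    fun t ht => mul_nonneg (exp_nonneg _) (hG₀ t (Ioc_subset_Icc_self ht))
  have hG_int : IntegrableOn (fun t => exp (-μ * t) * G t) (Ioc 0 T) :=
    ((by fun_prop : Continuous fun t => exp (-μ * t)).continuousOn.mul hG).integrableOn_Icc
      |>.mono_set Ioc_subset_Icc_self
  rw [intervalIntegral.integral_of_le hT, intervalIntegral.integral_of_le hT,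
    ← ENNReal.ofReal_le_ofReal_iff
      (mul_nonneg (by positivity) (setIntegral_nonneg measurableSet_Ioc hwG₀))]
  calc ENNReal.ofReal (∫ t in Ioc 0 T, exp (-μ * t) * F t)
      ≤ ∫⁻ t in Ioc 0 T, ‖exp (-μ * t) * F t‖ₑ :=
        (ofReal_le_enorm _).trans (enorm_integral_le_lintegral_enorm _)
    _ ≤ ∫⁻ t in Ioc 0 T, ENNReal.ofReal (1 / Gamma β) * (ENNReal.ofReal (exp (-μ * t))
          * ∫⁻ s in Ioc 0 t, ENNReal.ofReal ((t - s) ^ (β - 1)) * ENNReal.ofReal (G s)) :=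
        setLIntegral_mono' measurableSet_Ioc fun t ht => by
          rw [enorm_mul, enorm_of_nonneg (exp_nonneg _), mul_left_comm]
          gcongr
          exact hFG t ht
    _ = ENNReal.ofReal (1 / Gamma β) * ∫⁻ t in Ioc 0 T, ENNReal.ofReal (exp (-μ * t))
          * ∫⁻ s in Ioc 0 t, ENNReal.ofReal ((t - s) ^ (β - 1)) * ENNReal.ofReal (G s) :=
        lintegral_const_mul' _ _ ENNReal.ofReal_ne_top
    _ ≤ ENNReal.ofReal (1 / Gamma β) * (ENNReal.ofReal (Gamma β / μ ^ β)
          * ∫⁻ s in Ioc 0 T, ENNReal.ofReal (exp (-μ * s)) * ENNReal.ofReal (G s)) := by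
        gcongr
        exact lintegral_exp_neg_mul_mul_lintegral_rpow_le hβ hμ 0 T
          ((hG.mono Ioc_subset_Icc_self).aemeasurable measurableSet_Ioc).ennreal_ofReal
    _ = ENNReal.ofReal (1 / Gamma β) * (ENNReal.ofReal (Gamma β / μ ^ β)
          * ENNReal.ofReal (∫ s in Ioc 0 T, exp (-μ * s) * G s)) := by
        rw [ofReal_integral_eq_lintegral_ofReal hG_int
          ((ae_restrict_iff' measurableSet_Ioc).2 (ae_of_all _ hwG₀))]
        congr 2
        exact lintegral_congr fun s => (ENNReal.ofReal_mul (exp_nonneg _)).symm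
    _ = _ := by
        rw [← ENNReal.ofReal_mul (by positivity), ← ENNReal.ofReal_mul (by positivity)]
        congr 1
        field_simp

theorem ofReal_abs_sub_integral_rpow_mul_le {β t : ℝ} (ht : 0 ≤ t) {f g : ℝ → ℝ}
    (hf : IntervalIntegrable (fun s => (t - s) ^ (β - 1) * f s) volume 0 t)
    (hg : IntervalIntegrable (fun s => (t - s) ^ (β - 1) * g s) volume 0 t) :
    ENNReal.ofReal
        |(∫ s in 0..t, (t - s) ^ (β - 1) * f s) - ∫ s in 0..t, (t - s) ^ (β - 1) * g s|
      ≤ ∫⁻ s in Ioc 0 t, ENNReal.ofReal ((t - s) ^ (β - 1)) * ENNReal.ofReal |f s - g s| := by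
  rw [← intervalIntegral.integral_sub hf hg, intervalIntegral.integral_of_le ht,
    ← enorm_eq_ofReal_abs]
  refine (enorm_integral_le_lintegral_enorm _).trans_eq
    (setLIntegral_congr_fun measurableSet_Ioc fun s hs => ?_)
  rw [← mul_sub, enorm_mul, enorm_of_nonneg (rpow_nonneg (sub_nonneg.2 hs.2) _),
    enorm_eq_ofReal_abs]

theorem ofReal_sum_abs_sub_integral_rpow_mul_le {ι : Type*} [Fintype ι] {β t : ℝ} (hβ : 0 < β)
    (ht : 0 ≤ t) {f g : ℝ → ι → ℝ} (hf : ContinuousOn f (Icc 0 t))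
    (hg : ContinuousOn g (Icc 0 t)) :
    ENNReal.ofReal (∑ i, |(∫ s in 0..t, (t - s) ^ (β - 1) * f s i)
        - ∫ s in 0..t, (t - s) ^ (β - 1) * g s i|)
      ≤ ∫⁻ s in Ioc 0 t,
          ENNReal.ofReal ((t - s) ^ (β - 1)) * ENNReal.ofReal (∑ i, |f s i - g s i|) := by
  have hK : IntervalIntegrable (fun s => (t - s) ^ (β - 1)) volume 0 t := by
    simpa using (intervalIntegral.intervalIntegrable_rpow' (a := 0) (b := t)
      (by linarith : -1 < β - 1)).comp_sub_left t |>.symm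
  have hint : ∀ h : ℝ → ι → ℝ, ContinuousOn h (Icc 0 t) → ∀ i,
      IntervalIntegrable (fun s => (t - s) ^ (β - 1) * h s i) volume 0 t := fun h hh i =>
    hK.mul_continuousOn (by rw [uIcc_of_le ht]; exact (continuous_apply i).comp_continuousOn hh)
  have hmeas : ∀ i, AEMeasurable (fun s => ENNReal.ofReal ((t - s) ^ (β - 1))
      * ENNReal.ofReal |f s i - g s i|) (volume.restrict (Ioc 0 t)) := fun i =>
    (by fun_prop : Measurable fun s : ℝ => ENNReal.ofReal ((t - s) ^ (β - 1))).aemeasurable.mul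
      ((((continuous_apply i).comp_continuousOn hf).sub ((continuous_apply i).comp_continuousOn hg)
        ).abs.mono Ioc_subset_Icc_self |>.aemeasurable measurableSet_Ioc).ennreal_ofReal
  rw [ENNReal.ofReal_sum_of_nonneg fun i _ => abs_nonneg _]
  calc _ ≤ ∑ i, ∫⁻ s in Ioc 0 t,
          ENNReal.ofReal ((t - s) ^ (β - 1)) * ENNReal.ofReal |f s i - g s i| :=
        Finset.sum_le_sum fun i _ =>
          ofReal_abs_sub_integral_rpow_mul_le ht (hint f hf i) (hint g hg i)
    _ = ∫⁻ s in Ioc 0 t, ∑ i,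
          ENNReal.ofReal ((t - s) ^ (β - 1)) * ENNReal.ofReal |f s i - g s i| :=
        (lintegral_finsetSum' _ fun i _ => hmeas i).symm
    _ = _ := lintegral_congr fun s => by
        rw [← Finset.mul_sum, ENNReal.ofReal_sum_of_nonneg fun i _ => abs_nonneg _]

theorem continuous_of_sum_abs_sub_le {ι : Type*} [Fintype ι] {L : ℝ} {E : (ι → ℝ) → ι → ℝ}
    (h : ∀ x y, ∑ i, |E x i - E y i| ≤ L * ∑ i, |x i - y i|) : Continuous E := by
  let E₁ : PiLp 1 (fun _ : ι => ℝ) → PiLp 1 (fun _ : ι => ℝ) :=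
    fun x => WithLp.toLp 1 (E (WithLp.ofLp x))
  have hE₁ : LipschitzWith L.toNNReal E₁ := LipschitzWith.of_dist_le_mul fun x y => by
    simp only [PiLp.dist_eq_of_L1, Real.dist_eq, E₁]
    exact (h _ _).trans (mul_le_mul_of_nonneg_right (le_coe_toNNReal L)
      (Finset.sum_nonneg fun i _ => abs_nonneg _))
  exact (PiLp.continuous_ofLp 1 _).comp (hE₁.continuous.comp (PiLp.continuous_toLp 1 _))

theorem nonneg_of_sum_abs_sub_le {ι : Type*} [Fintype ι] [Nonempty ι] {L : ℝ}
    {E : (ι → ℝ) → ι → ℝ} (h : ∀ x y, ∑ i, |E x i - E y i| ≤ L * ∑ i, |x i - y i|) : 0 ≤ L := by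
  have h01 := h 0 1
  simp only [Pi.zero_apply, Pi.one_apply, zero_sub, abs_neg, abs_one, Finset.sum_const,
    Finset.card_univ, nsmul_eq_mul, mul_one] at h01
  exact nonneg_of_mul_nonneg_left ((Finset.sum_nonneg fun i _ => abs_nonneg _).trans h01)
    (by exact_mod_cast Fintype.card_pos)

/-- **Contraction estimate for the fractional-integral operator `Λ`.**
With `(ΛP)(t) = P⁰ + (1/Γ(β)) ∫₀ᵗ (t−s)^{β−1} E(P(s)) ds` and `E` Lipschitz
with constant `L` w.r.t. the `ℓ¹` norm, one has for continuous `P, Q`: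
`∫₀ᵀ e^{−μt} ‖(ΛP)(t) − (ΛQ)(t)‖₁ dt ≤ (L/μ^β) ∫₀ᵀ e^{−μt} ‖P(t) − Q(t)‖₁ dt`;
in particular `Λ` is a contraction in the weighted norm whenever `L < μ^β`. -/
theorem stmt_7 (n : ℕ) (β μ T L : ℝ) (hβ : 0 < β) (hμ : 0 < μ) (hT : 0 < T)
    (P0 : Fin n → ℝ) (E : (Fin n → ℝ) → Fin n → ℝ)
    (hLip : ∀ x y : Fin n → ℝ, (∑ i, |E x i - E y i|) ≤ L * ∑ i, |x i - y i|)
    (Λ : (ℝ → Fin n → ℝ) → ℝ → Fin n → ℝ)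
    (hΛ : ∀ (P : ℝ → Fin n → ℝ) (t : ℝ) (i : Fin n),
      Λ P t i = P0 i + (1 / Real.Gamma β) *
        ∫ s in (0:ℝ)..t, (t - s) ^ (β - 1) * E (P s) i)
    (P Q : ℝ → Fin n → ℝ)
    (hP : ContinuousOn P (Set.Icc (0:ℝ) T))
    (hQ : ContinuousOn Q (Set.Icc (0:ℝ) T)) :
    ((∫ t in (0:ℝ)..T, Real.exp (-μ * t) * ∑ i, |Λ P t i - Λ Q t i|)
        ≤ (L / μ ^ β) *
          ∫ t in (0:ℝ)..T, Real.exp (-μ * t) * ∑ i, |P t i - Q t i|) ∧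
      (L < μ ^ β → L / μ ^ β < 1) := by
  refine ⟨?_, fun h => (div_lt_one (rpow_pos_of_pos hμ β)).2 h⟩
  rcases isEmpty_or_nonempty (Fin n) with hn | hn
  · simp
  have hL := nonneg_of_sum_abs_sub_le hLip
  have hE := continuous_of_sum_abs_sub_le hLip
  calc _ ≤ 1 / μ ^ β * ∫ t in 0..T, exp (-μ * t) * (L * ∑ i, |P t i - Q t i|) := by
        refine integral_exp_neg_mul_le_of_enorm_le_lintegral_rpow hβ hμ hT.le (by fun_prop)
          (fun t _ => by positivity) fun t ht => ?_
        have hsub : Icc 0 t ⊆ Icc 0 T := Icc_subset_Icc_right ht.2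
        simp_rw [hΛ, add_sub_add_left_eq_sub, ← mul_sub, abs_mul, ← Finset.mul_sum,
          abs_of_pos (one_div_pos.2 (Gamma_pos_of_pos hβ))]
        rw [enorm_of_nonneg (by positivity), ENNReal.ofReal_mul (by positivity)]
        gcongr
        exact (ofReal_sum_abs_sub_integral_rpow_mul_le hβ ht.1.le
          (hE.comp_continuousOn (hP.mono hsub)) (hE.comp_continuousOn (hQ.mono hsub))).trans
          (lintegral_mono fun s => by gcongr; exact hLip _ _)
    _ = _ := by
        simp_rw [mul_left_comm _ L]
        rw [intervalIntegral.integral_const_mul]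
        ring
end

section
/- Let n ∈ ℕ, β > 0, T > 0, P⁰ ∈ ℝⁿ, and let E : ℝⁿ → ℝⁿ be Lipschitz continuous. If P, Q : [0,T] → ℝⁿ are continuous functions such that P(t) = P⁰ + (1/Γ(β)) ∫₀ᵗ (t−s)^{β−1} E(P(s)) ds and Q(t) = P⁰ + (1/Γ(β)) ∫₀ᵗ (t−s)^{β−1} E(Q(s)) ds for all t ∈ [0,T], then P = Q on [0,T]. -/
/-!
The difference `g t = ‖P t - Q t‖` satisfies the homogeneous fractional Volterra inequality
`g t ≤ C ∫₀ᵗ (t - s)^(β - 1) g s ds` with `C = K / Γ(β)`. Choose `h > 0` with `C h^β ≤ β / 2`.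
If `g` vanishes on `[0, a]`, then on `[0, a + h]` the inequality only sees `[a, t]`, where the
kernel has mass `(t - a)^β / β ≤ h^β / β`; so the maximum `M` of `g` there satisfies `M ≤ M / 2`,
and `g` vanishes on `[0, a + h]`. Finitely many such steps cover `[0, T]`.
-/

open MeasureTheory Set

section FractionalKernel

variable {β a t : ℝ}

theorem intervalIntegrable_rpow_sub_mul (hβ : 0 < β) (hat : a ≤ t) {f : ℝ → ℝ}
    (hf : ContinuousOn f (Icc a t)) :
    IntervalIntegrable (fun s => (t - s) ^ (β - 1) * f s) volume a t := by
  have hk : IntervalIntegrable (fun x : ℝ => x ^ (β - 1)) volume 0 (t - a) :=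
    intervalIntegral.intervalIntegrable_rpow' (by linarith)
  have hk' := hk.comp_sub_left t
  simp only [sub_zero, sub_sub_cancel] at hk'
  exact hk'.symm.mul_continuousOn (by rwa [uIcc_of_le hat])

theorem integral_rpow_sub (hβ : 0 < β) :
    ∫ s in a..t, (t - s) ^ (β - 1) = (t - a) ^ β / β := by
  rw [intervalIntegral.integral_comp_sub_left (fun x : ℝ => x ^ (β - 1)), sub_self,
    integral_rpow (Or.inl (by linarith)), sub_add_cancel, Real.zero_rpow hβ.ne', sub_zero]

theorem abs_integral_rpow_sub_mul_le (hβ : 0 < β) (hat : a ≤ t) {u w : ℝ → ℝ}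
    (hu : ContinuousOn u (Icc a t)) (hw : ContinuousOn w (Icc a t))
    (huw : ∀ s ∈ Icc a t, |u s| ≤ w s) :
    |∫ s in a..t, (t - s) ^ (β - 1) * u s| ≤ ∫ s in a..t, (t - s) ^ (β - 1) * w s := by
  refine (intervalIntegral.abs_integral_le_integral_abs hat).trans ?_
  refine intervalIntegral.integral_mono_on hat (intervalIntegrable_rpow_sub_mul hβ hat hu).abs
    (intervalIntegrable_rpow_sub_mul hβ hat hw) fun s hs => ?_
  have hk : 0 ≤ (t - s) ^ (β - 1) := Real.rpow_nonneg (by linarith [hs.2]) _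
  rw [abs_mul, abs_of_nonneg hk]
  exact mul_le_mul_of_nonneg_left (huw s hs) hk

end FractionalKernel

section VolterraInequality

variable {β C T : ℝ} {g : ℝ → ℝ}

theorem eq_zero_of_le_volterra_step (hβ : 0 < β) (hC : 0 ≤ C)
    (hgc : ContinuousOn g (Icc 0 T)) (hg0 : ∀ t ∈ Icc 0 T, 0 ≤ g t)
    (hg : ∀ t ∈ Icc 0 T, g t ≤ C * ∫ s in 0..t, (t - s) ^ (β - 1) * g s)
    {h : ℝ} (hh : C * h ^ β ≤ β / 2) {a : ℝ} (ha : 0 ≤ a)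
    (hga : ∀ s ∈ Icc 0 T, s ≤ a → g s = 0) :
    ∀ s ∈ Icc 0 T, s ≤ a + h → g s = 0 := by
  intro s hs hsa
  set b := min (a + h) T
  have hsub : Icc 0 b ⊆ Icc 0 T := Icc_subset_Icc_right (min_le_right _ _)
  have hsb : s ∈ Icc 0 b := ⟨hs.1, le_min hsa hs.2⟩
  obtain ⟨m, hm, hmax⟩ := isCompact_Icc.exists_isMaxOn ⟨s, hsb⟩ (hgc.mono hsub)
  have hM : 0 ≤ g m := hg0 m (hsub hm)
  have hhalf : ∀ t ∈ Icc 0 b, g t ≤ g m / 2 := by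
    intro t ht
    have htT : t ∈ Icc 0 T := hsub ht
    rcases le_or_gt t a with hta | hat
    · rw [hga t htT hta]
      positivity
    have hint := intervalIntegrable_rpow_sub_mul hβ htT.1 (hgc.mono (Icc_subset_Icc_right htT.2))
    have hint0a : IntervalIntegrable (fun s => (t - s) ^ (β - 1) * g s) volume 0 a :=
      hint.mono_set (by rw [uIcc_of_le ha, uIcc_of_le htT.1]; exact Icc_subset_Icc_right hat.le)
    have hintat : IntervalIntegrable (fun s => (t - s) ^ (β - 1) * g s) volume a t :=
      hint.mono_set (by rw [uIcc_of_le hat.le, uIcc_of_le htT.1]; exact Icc_subset_Icc_left ha)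
    have hvanish : ∫ s in 0..a, (t - s) ^ (β - 1) * g s = 0 := by
      rw [intervalIntegral.integral_congr (g := fun _ => 0) fun s hs => ?_,
        intervalIntegral.integral_zero]
      rw [uIcc_of_le ha] at hs
      simp only [hga s ⟨hs.1, hs.2.trans (hat.trans_le htT.2).le⟩ hs.2, mul_zero]
    calc g t ≤ C * ∫ s in 0..t, (t - s) ^ (β - 1) * g s := hg t htT
      _ = C * ∫ s in a..t, (t - s) ^ (β - 1) * g s := by
        rw [← intervalIntegral.integral_add_adjacent_intervals hint0a hintat, hvanish, zero_add]
      _ ≤ C * ∫ s in a..t, (t - s) ^ (β - 1) * g m := by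
        gcongr
        refine intervalIntegral.integral_mono_on hat.le hintat
          (intervalIntegrable_rpow_sub_mul hβ hat.le continuousOn_const) fun s hs => ?_
        exact mul_le_mul_of_nonneg_left (hmax ⟨ha.trans hs.1, hs.2.trans ht.2⟩)
          (Real.rpow_nonneg (by linarith [hs.2]) _)
      _ = g m * (C * (t - a) ^ β) / β := by
        rw [intervalIntegral.integral_mul_const, integral_rpow_sub hβ]
        ring
      _ ≤ g m * (C * h ^ β) / β := by
        gcongr
        linarith [ht.2.trans (min_le_left _ _)]
      _ ≤ g m * (β / 2) / β := by gcongr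
      _ = g m / 2 := by field_simp
  have hM0 : g m ≤ 0 := by linarith [hhalf m hm]
  exact le_antisymm ((hmax hsb).trans hM0) (hg0 s hs)

theorem eq_zero_of_le_volterra (hβ : 0 < β) (hC : 0 ≤ C)
    (hgc : ContinuousOn g (Icc 0 T)) (hg0 : ∀ t ∈ Icc 0 T, 0 ≤ g t)
    (hg : ∀ t ∈ Icc 0 T, g t ≤ C * ∫ s in 0..t, (t - s) ^ (β - 1) * g s) :
    ∀ t ∈ Icc 0 T, g t = 0 := by
  obtain ⟨h, hh, hhC⟩ : ∃ h > 0, C * h ^ β ≤ β / 2 := by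
    have hε : 0 < β / (2 * (C + 1)) := by positivity
    refine ⟨(β / (2 * (C + 1))) ^ β⁻¹, by positivity, ?_⟩
    rw [Real.rpow_inv_rpow hε.le hβ.ne', mul_div_assoc', div_le_div_iff₀ (by positivity) two_pos]
    nlinarith
  have hsteps : ∀ k : ℕ, ∀ s ∈ Icc 0 T, s ≤ k * h → g s = 0 := by
    intro k
    induction k with
    | zero =>
      intro s hs hs0
      obtain rfl : s = 0 := le_antisymm (by simpa using hs0) hs.1
      refine le_antisymm ?_ (hg0 0 hs)
      simpa using hg 0 hs
    | succ k ih =>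
      rw [Nat.cast_succ, add_one_mul]
      exact eq_zero_of_le_volterra_step hβ hC hgc hg0 hg hhC (by positivity) ih
  intro t ht
  obtain ⟨k, hk⟩ := exists_nat_ge (t / h)
  exact hsteps k t ht ((div_le_iff₀ hh).1 hk)

end VolterraInequality

theorem norm_sub_le_volterra_of_lipschitzWith {ι : Type*} [Fintype ι] {β T : ℝ} (hβ : 0 < β)
    {P0 : ι → ℝ} {E : (ι → ℝ) → ι → ℝ} {K : NNReal} (hE : LipschitzWith K E)
    {P Q : ℝ → ι → ℝ} (hPc : ContinuousOn P (Icc 0 T)) (hQc : ContinuousOn Q (Icc 0 T))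
    (hP : ∀ t ∈ Icc 0 T, ∀ i, P t i = P0 i + (1 / Real.Gamma β) *
      ∫ s in (0:ℝ)..t, (t - s) ^ (β - 1) * E (P s) i)
    (hQ : ∀ t ∈ Icc 0 T, ∀ i, Q t i = P0 i + (1 / Real.Gamma β) *
      ∫ s in (0:ℝ)..t, (t - s) ^ (β - 1) * E (Q s) i) :
    ∀ t ∈ Icc 0 T, ‖P t - Q t‖ ≤
      K / Real.Gamma β * ∫ s in 0..t, (t - s) ^ (β - 1) * ‖P s - Q s‖ := by
  intro t ht
  have hsub : Icc 0 t ⊆ Icc 0 T := Icc_subset_Icc_right ht.2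
  have hEc : ∀ R : ℝ → ι → ℝ, ContinuousOn R (Icc 0 T) → ∀ i,
      ContinuousOn (fun s => E (R s) i) (Icc 0 t) := fun R hR i =>
    continuousOn_pi.1 (hE.continuous.comp_continuousOn (hR.mono hsub)) i
  have hint_nonneg : 0 ≤ ∫ s in 0..t, (t - s) ^ (β - 1) * ‖P s - Q s‖ :=
    intervalIntegral.integral_nonneg ht.1 fun s hs =>
      mul_nonneg (Real.rpow_nonneg (by linarith [hs.2]) _) (norm_nonneg _)
  refine (pi_norm_le_iff_of_nonneg (by positivity)).2 fun i => ?_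
  have hdiff : P t i - Q t i = 1 / Real.Gamma β *
      ∫ s in 0..t, (t - s) ^ (β - 1) * (E (P s) i - E (Q s) i) := by
    simp only [mul_sub]
    rw [intervalIntegral.integral_sub (intervalIntegrable_rpow_sub_mul hβ ht.1 (hEc P hPc i))
      (intervalIntegrable_rpow_sub_mul hβ ht.1 (hEc Q hQc i)), hP t ht i, hQ t ht i]
    ring
  have hlip : ∀ s ∈ Icc 0 t, |E (P s) i - E (Q s) i| ≤ K * ‖P s - Q s‖ := fun s _ =>
    (norm_le_pi_norm (E (P s) - E (Q s)) i).trans (hE.norm_sub_le (P s) (Q s))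
  calc ‖(P t - Q t) i‖
    _ = 1 / Real.Gamma β * |∫ s in 0..t, (t - s) ^ (β - 1) * (E (P s) i - E (Q s) i)| := by
      rw [Pi.sub_apply, Real.norm_eq_abs, hdiff, abs_mul, abs_of_pos (by positivity)]
    _ ≤ 1 / Real.Gamma β * ∫ s in 0..t, (t - s) ^ (β - 1) * (K * ‖P s - Q s‖) := by
      gcongr
      exact abs_integral_rpow_sub_mul_le hβ ht.1 ((hEc P hPc i).sub (hEc Q hQc i))
        (((hPc.sub hQc).norm.mono hsub).const_smul (K : ℝ)) hlip
    _ = K / Real.Gamma β * ∫ s in 0..t, (t - s) ^ (β - 1) * ‖P s - Q s‖ := by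
      simp only [mul_left_comm _ (K : ℝ), intervalIntegral.integral_const_mul]
      ring

theorem stmt_8_general (n : ℕ) (β T : ℝ) (hβ : 0 < β)
    (P0 : Fin n → ℝ) (E : (Fin n → ℝ) → Fin n → ℝ)
    (K : NNReal) (hE : LipschitzWith K E)
    (P Q : ℝ → Fin n → ℝ)
    (hPc : ContinuousOn P (Set.Icc (0:ℝ) T))
    (hQc : ContinuousOn Q (Set.Icc (0:ℝ) T))
    (hP : ∀ t ∈ Set.Icc (0:ℝ) T, ∀ i, P t i = P0 i + (1 / Real.Gamma β) *
      ∫ s in (0:ℝ)..t, (t - s) ^ (β - 1) * E (P s) i)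
    (hQ : ∀ t ∈ Set.Icc (0:ℝ) T, ∀ i, Q t i = P0 i + (1 / Real.Gamma β) *
      ∫ s in (0:ℝ)..t, (t - s) ^ (β - 1) * E (Q s) i) :
    ∀ t ∈ Set.Icc (0:ℝ) T, P t = Q t := by
  have hdist : ∀ t ∈ Icc 0 T, ‖P t - Q t‖ = 0 :=
    eq_zero_of_le_volterra hβ (div_nonneg K.coe_nonneg (Real.Gamma_pos_of_pos hβ).le)
      (hPc.sub hQc).norm (fun t _ => norm_nonneg _)
      (norm_sub_le_volterra_of_lipschitzWith hβ hE hPc hQc hP hQ)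
  exact fun t ht => sub_eq_zero.1 (norm_eq_zero.1 (hdist t ht))

/-- **Uniqueness of the equilibrium trajectory of the fractional evolutionary
game.** If `E` is Lipschitz and `P, Q : [0,T] → ℝⁿ` are continuous solutions of
the Volterra equation `P(t) = P⁰ + (1/Γ(β)) ∫₀ᵗ (t−s)^{β−1} E(P(s)) ds`,
then `P = Q` on `[0,T]`. -/
theorem stmt_8 (n : ℕ) (β T : ℝ) (hβ : 0 < β) (hT : 0 < T)
    (P0 : Fin n → ℝ) (E : (Fin n → ℝ) → Fin n → ℝ)
    (K : NNReal) (hE : LipschitzWith K E)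
    (P Q : ℝ → Fin n → ℝ)
    (hPc : ContinuousOn P (Set.Icc (0:ℝ) T))
    (hQc : ContinuousOn Q (Set.Icc (0:ℝ) T))
    (hP : ∀ t ∈ Set.Icc (0:ℝ) T, ∀ i, P t i = P0 i + (1 / Real.Gamma β) *
      ∫ s in (0:ℝ)..t, (t - s) ^ (β - 1) * E (P s) i)
    (hQ : ∀ t ∈ Set.Icc (0:ℝ) T, ∀ i, Q t i = P0 i + (1 / Real.Gamma β) *
      ∫ s in (0:ℝ)..t, (t - s) ^ (β - 1) * E (Q s) i) :
    ∀ t ∈ Set.Icc (0:ℝ) T, P t = Q t :=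
  stmt_8_general n β T hβ P0 E K hE P Q hPc hQc hP hQ
end

section
/- Let n ∈ ℕ, β > 0, T > 0, P⁰ ∈ ℝⁿ, and let E : ℝⁿ → ℝⁿ be Lipschitz continuous. Then there exists exactly one continuous function P : [0,T] → ℝⁿ satisfying P(t) = P⁰ + (1/Γ(β)) ∫₀ᵗ (t−s)^{β−1} E(P(s)) ds for all t ∈ [0,T]. -/
/-!
The Picard operator `Φ f = P⁰ + I^β (E ∘ f)` acts on `C([0,T], F)`. It is not a contraction for the
sup norm, but it is one for the Bielecki norm `sup_t e^{-ρt} ‖f t‖` once `ρ^β = K + 1`: substituting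
`u = t - s` turns `∫₀ᵗ (t-s)^{β-1} e^{ρs} ds` into `e^{ρt}` times a truncated Gamma integral, so `I^β`
maps the weight `e^{ρs}` to at most `Γ(β) ρ^{-β} e^{ρt}`. The Banach fixed point theorem, applied to `Φ`
conjugated by multiplication with `e^{ρt}`, gives existence and uniqueness.
-/

open MeasureTheory Set Filter

theorem ContractingWith.existsUnique_isFixedPt_of_conj {α : Type*} [MetricSpace α]
    [CompleteSpace α] [Nonempty α] {K : NNReal} {f : α → α} (e : α ≃ α)
    (hf : ContractingWith K (e.symm ∘ f ∘ e)) : ∃! x, Function.IsFixedPt f x := by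
  have hfix : ∀ x, Function.IsFixedPt f x ↔ Function.IsFixedPt (e.symm ∘ f ∘ e) (e.symm x) := by
    intro x
    simp only [Function.IsFixedPt, Function.comp_apply, Equiv.apply_symm_apply,
      Equiv.symm_apply_eq]
  refine ⟨e (hf.fixedPoint _), (hfix _).2 ?_, fun x hx => ?_⟩
  · simpa using hf.fixedPoint_isFixedPt
  · rw [← e.apply_symm_apply x, hf.fixedPoint_unique ((hfix x).1 hx)]

namespace FractionalIntegral

variable {F : Type*} [NormedAddCommGroup F] [NormedSpace ℝ F] {β T : ℝ}

theorem intervalIntegrable_sub_rpow (hβ : 0 < β) (c a b : ℝ) :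
    IntervalIntegrable (fun s => (c - s) ^ (β - 1)) volume a b := by
  simpa using (intervalIntegral.intervalIntegrable_rpow' (a := c - a) (b := c - b)
    (r := β - 1) (by linarith)).comp_sub_left c

/-- After substituting `u = t - s` the singularity of the kernel no longer moves with `t`, so the
integrand is dominated uniformly in `t`. -/
theorem intervalIntegral_sub_rpow_smul_eq_indicator {g : ℝ → F} {t R : ℝ} (ht : t ∈ Icc 0 R) :
    ∫ s in (0:ℝ)..t, (t - s) ^ (β - 1) • g s =
      ∫ u in (0:ℝ)..R, {u | u ≤ t}.indicator (fun u => u ^ (β - 1) • g (t - u)) u := by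
  rw [intervalIntegral.integral_indicator ht]
  simpa using (intervalIntegral.integral_comp_sub_left (a := 0) (b := t)
    (fun u => u ^ (β - 1) • g (t - u)) t)

theorem continuousOn_intervalIntegral_sub_rpow_smul (hβ : 0 < β) {g : ℝ → F}
    (hg : Continuous g) (R : ℝ) :
    ContinuousOn (fun t => ∫ s in (0:ℝ)..t, (t - s) ^ (β - 1) • g s) (Icc 0 R) := by
  obtain ⟨M, hM⟩ := (isCompact_Icc (a := (0:ℝ)) (b := R)).exists_bound_of_continuousOn
    hg.continuousOn
  refine ContinuousOn.congr (fun t₀ _ => ?_)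
    fun t ht => intervalIntegral_sub_rpow_smul_eq_indicator ht
  refine intervalIntegral.continuousWithinAt_of_dominated_interval
    (bound := fun u => u ^ (β - 1) * M) ?_ ?_ ?_ ?_
  · refine Eventually.of_forall fun t => ?_
    refine AEStronglyMeasurable.indicator ?_ measurableSet_Iic
    exact (measurable_id.pow_const _).aestronglyMeasurable.smul
      (hg.comp (continuous_const.sub continuous_id)).aestronglyMeasurable
  · filter_upwards [self_mem_nhdsWithin] with t ht
    refine Eventually.of_forall fun u hu => ?_
    rw [uIoc_of_le (ht.1.trans ht.2)] at hu
    have hker : 0 ≤ u ^ (β - 1) := Real.rpow_nonneg hu.1.le _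
    by_cases hut : u ≤ t
    · rw [indicator_of_mem (s := {u | u ≤ t}) hut, norm_smul, Real.norm_of_nonneg hker]
      exact mul_le_mul_of_nonneg_left (hM _ ⟨by linarith, by linarith [ht.2, hu.1]⟩) hker
    · rw [indicator_of_notMem (s := {u | u ≤ t}) hut, norm_zero]
      exact mul_nonneg hker ((norm_nonneg _).trans (hM 0 ⟨le_rfl, ht.1.trans ht.2⟩))
  · exact (intervalIntegral.intervalIntegrable_rpow' (by linarith)).mul_const M
  · filter_upwards [Measure.ae_ne volume t₀] with u hu _
    refine ContinuousAt.continuousWithinAt ?_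
    rcases hu.lt_or_gt with hlt | hgt
    · have hcont : Continuous fun t => u ^ (β - 1) • g (t - u) := by fun_prop
      refine hcont.continuousAt.congr ?_
      filter_upwards [Ioi_mem_nhds hlt] with t ht
      simp [indicator, (mem_Ioi.1 ht).le]
    · refine (continuousAt_const (y := (0 : F))).congr ?_
      filter_upwards [Iio_mem_nhds hgt] with t ht
      simp [indicator, not_le.2 (mem_Iio.1 ht)]

theorem integral_rpow_mul_exp_neg_mul_le (hβ : 0 < β) {ρ : ℝ} (hρ : 0 < ρ) {t : ℝ} (ht : 0 ≤ t) :
    ∫ u in (0:ℝ)..t, u ^ (β - 1) * Real.exp (-(ρ * u)) ≤ Real.Gamma β / ρ ^ β := by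
  have hint : IntegrableOn (fun u : ℝ => u ^ (β - 1) * Real.exp (-(ρ * u))) (Ioi 0) := by
    simpa [neg_mul] using
      integrableOn_rpow_mul_exp_neg_mul_rpow (p := 1) (by linarith : -1 < β - 1) one_pos hρ
  rw [intervalIntegral.integral_of_le ht]
  calc ∫ u in Ioc 0 t, u ^ (β - 1) * Real.exp (-(ρ * u))
      ≤ ∫ u in Ioi 0, u ^ (β - 1) * Real.exp (-(ρ * u)) := by
        refine setIntegral_mono_set hint ?_ Ioc_subset_Ioi_self.eventuallyLE
        filter_upwards [ae_restrict_mem measurableSet_Ioi] with u (hu : 0 < u)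
        positivity
    _ = Real.Gamma β / ρ ^ β := by
        rw [Real.integral_rpow_mul_exp_neg_mul_Ioi hβ hρ, Real.div_rpow zero_le_one hρ.le,
          Real.one_rpow, one_div_mul_eq_div]

theorem integral_sub_rpow_mul_exp_le (hβ : 0 < β) {ρ : ℝ} (hρ : 0 < ρ) {t : ℝ} (ht : 0 ≤ t) :
    ∫ s in (0:ℝ)..t, (t - s) ^ (β - 1) * Real.exp (ρ * s) ≤
      Real.Gamma β / ρ ^ β * Real.exp (ρ * t) := by
  have hsub : ∫ s in (0:ℝ)..t, (t - s) ^ (β - 1) * Real.exp (ρ * s) =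
      Real.exp (ρ * t) * ∫ u in (0:ℝ)..t, u ^ (β - 1) * Real.exp (-(ρ * u)) := by
    rw [← intervalIntegral.integral_const_mul]
    simpa [mul_sub, Real.exp_sub, Real.exp_neg, div_eq_mul_inv, mul_left_comm] using
      intervalIntegral.integral_comp_sub_left (a := 0) (b := t)
        (fun u => u ^ (β - 1) * Real.exp (ρ * (t - u))) t
  rw [hsub, mul_comm _ (Real.exp _)]
  exact mul_le_mul_of_nonneg_left (integral_rpow_mul_exp_neg_mul_le hβ hρ ht) (by positivity)

noncomputable def riemannLiouville (β : ℝ) (g : ℝ → F) (t : ℝ) : F :=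
  (Real.Gamma β)⁻¹ • ∫ s in (0:ℝ)..t, (t - s) ^ (β - 1) • g s

theorem continuousOn_riemannLiouville (hβ : 0 < β) {g : ℝ → F} (hg : Continuous g) (R : ℝ) :
    ContinuousOn (riemannLiouville β g) (Icc 0 R) :=
  (continuousOn_intervalIntegral_sub_rpow_smul hβ hg R).const_smul _

theorem riemannLiouville_congr {g₁ g₂ : ℝ → F} {t : ℝ} (ht : 0 ≤ t) (h : EqOn g₁ g₂ (Icc 0 t)) :
    riemannLiouville β g₁ t = riemannLiouville β g₂ t := by
  unfold riemannLiouville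
  congr 1
  refine intervalIntegral.integral_congr fun s hs => ?_
  rw [uIcc_of_le ht] at hs
  simp only [h hs]

theorem riemannLiouville_sub (hβ : 0 < β) {g₁ g₂ : ℝ → F} (hg₁ : Continuous g₁)
    (hg₂ : Continuous g₂) (t : ℝ) :
    riemannLiouville β g₁ t - riemannLiouville β g₂ t = riemannLiouville β (g₁ - g₂) t := by
  have hint : ∀ g : ℝ → F, Continuous g →
      IntervalIntegrable (fun s => (t - s) ^ (β - 1) • g s) volume 0 t :=
    fun g hg => (intervalIntegrable_sub_rpow hβ t 0 t).smul_continuousOn hg.continuousOn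
  simp only [riemannLiouville, Pi.sub_apply, smul_sub,
    intervalIntegral.integral_sub (hint g₁ hg₁) (hint g₂ hg₂)]

theorem norm_riemannLiouville_le (hβ : 0 < β) {g : ℝ → F} {ρ C t : ℝ} (hρ : 0 < ρ) (ht : 0 ≤ t)
    (hg : ∀ s ∈ Icc 0 t, ‖g s‖ ≤ C * Real.exp (ρ * s)) :
    ‖riemannLiouville β g t‖ ≤ C / ρ ^ β * Real.exp (ρ * t) := by
  have hΓ : 0 < Real.Gamma β := Real.Gamma_pos_of_pos hβ
  have hC : 0 ≤ C := by
    have := (norm_nonneg _).trans (hg 0 ⟨le_rfl, ht⟩)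
    rwa [mul_zero, Real.exp_zero, mul_one] at this
  have hbound : ‖∫ s in (0:ℝ)..t, (t - s) ^ (β - 1) • g s‖ ≤
      ∫ s in (0:ℝ)..t, C * ((t - s) ^ (β - 1) * Real.exp (ρ * s)) := by
    refine intervalIntegral.norm_integral_le_of_norm_le ht (Eventually.of_forall fun s hs => ?_)
      (((intervalIntegrable_sub_rpow hβ t 0 t).mul_continuousOn
        (by fun_prop)).const_mul C)
    have hker : 0 ≤ (t - s) ^ (β - 1) := Real.rpow_nonneg (by linarith [hs.2]) _
    rw [norm_smul, Real.norm_of_nonneg hker, mul_left_comm]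
    exact mul_le_mul_of_nonneg_left (hg s (Ioc_subset_Icc_self hs)) hker
  rw [intervalIntegral.integral_const_mul] at hbound
  calc ‖riemannLiouville β g t‖
      ≤ (Real.Gamma β)⁻¹ * (C * ∫ s in (0:ℝ)..t, (t - s) ^ (β - 1) * Real.exp (ρ * s)) := by
        rw [riemannLiouville, norm_smul, Real.norm_of_nonneg (inv_nonneg.2 hΓ.le)]
        gcongr
    _ ≤ (Real.Gamma β)⁻¹ * (C * (Real.Gamma β / ρ ^ β * Real.exp (ρ * t))) := by
        gcongr
        exact integral_sub_rpow_mul_exp_le hβ hρ ht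
    _ = C / ρ ^ β * Real.exp (ρ * t) := by
        field_simp

theorem riemannLiouville_apply {ι : Type*} [Fintype ι] (hβ : 0 < β) {g : ℝ → ι → ℝ} {t : ℝ}
    (ht : 0 ≤ t) (hg : ContinuousOn g (Icc 0 t)) (i : ι) :
    riemannLiouville β g t i = (Real.Gamma β)⁻¹ * ∫ s in (0:ℝ)..t, (t - s) ^ (β - 1) * g s i := by
  have hint : IntervalIntegrable (fun s => (t - s) ^ (β - 1) • g s) volume 0 t :=
    (intervalIntegrable_sub_rpow hβ t 0 t).smul_continuousOn (by rwa [uIcc_of_le ht])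
  rw [riemannLiouville, Pi.smul_apply, smul_eq_mul]
  exact congrArg _
    ((ContinuousLinearMap.proj (R := ℝ) (φ := fun _ : ι => ℝ) i).intervalIntegral_comp_comm hint).symm

noncomputable def expWeight (ρ : ℝ) : C(Icc 0 T, F) ≃ C(Icc 0 T, F) where
  toFun f := ⟨fun t => Real.exp (ρ * t) • f t, by fun_prop⟩
  invFun f := ⟨fun t => Real.exp (-(ρ * t)) • f t, by fun_prop⟩
  left_inv f := by ext t; simp [smul_smul, ← Real.exp_add]
  right_inv f := by ext t; simp [smul_smul, ← Real.exp_add]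

noncomputable def picard (hβ : 0 < β) (hT : 0 ≤ T) (P₀ : F) (E : C(F, F))
    (f : C(Icc 0 T, F)) : C(Icc 0 T, F) where
  toFun t := P₀ + riemannLiouville β (E ∘ IccExtend hT f) t
  continuous_toFun := (continuousOn_const.add
    (continuousOn_riemannLiouville hβ (E.continuous.comp f.continuous.Icc_extend') T)).domRestrict

section Picard

variable (hβ : 0 < β) (hT : 0 ≤ T) (P₀ : F) {E : C(F, F)}

theorem picard_apply_of_eqOn {f : C(Icc 0 T, F)} {Q : ℝ → F}
    (hQ : EqOn (IccExtend hT f) Q (Icc 0 T)) (t : Icc 0 T) :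
    picard hβ hT P₀ E f t = P₀ + riemannLiouville β (E ∘ Q) t := by
  refine congrArg (P₀ + ·) (riemannLiouville_congr t.2.1 fun s hs => ?_)
  exact congrArg E (hQ ⟨hs.1, hs.2.trans t.2.2⟩)

theorem norm_picard_sub_le {K : NNReal} (hE : LipschitzWith K E) {ρ C : ℝ} (hρ : 0 < ρ)
    {f g : C(Icc 0 T, F)} (hfg : ∀ s, ‖f s - g s‖ ≤ C * Real.exp (ρ * s)) (t : Icc 0 T) :
    ‖picard hβ hT P₀ E f t - picard hβ hT P₀ E g t‖ ≤ K * C / ρ ^ β * Real.exp (ρ * t) := by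
  have hcont : ∀ f : C(Icc 0 T, F), Continuous (E ∘ IccExtend hT f) :=
    fun f => E.continuous.comp f.continuous.Icc_extend'
  rw [picard_apply_of_eqOn hβ hT P₀ (Q := IccExtend hT f) (fun _ _ => rfl),
    picard_apply_of_eqOn hβ hT P₀ (Q := IccExtend hT g) (fun _ _ => rfl),
    add_sub_add_left_eq_sub, riemannLiouville_sub hβ (hcont f) (hcont g)]
  refine norm_riemannLiouville_le hβ hρ t.2.1 fun s hs => ?_
  have hsT : s ∈ Icc 0 T := ⟨hs.1, hs.2.trans t.2.2⟩
  simp only [Pi.sub_apply, Function.comp_apply, IccExtend_of_mem hT _ hsT, ← dist_eq_norm]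
  calc dist (E (f ⟨s, hsT⟩)) (E (g ⟨s, hsT⟩)) ≤ K * dist (f ⟨s, hsT⟩) (g ⟨s, hsT⟩) :=
        hE.dist_le_mul _ _
    _ ≤ K * (C * Real.exp (ρ * s)) := by
        rw [dist_eq_norm]
        exact mul_le_mul_of_nonneg_left (hfg _) K.2
    _ = K * C * Real.exp (ρ * s) := by ring

theorem contractingWith_picard_conj {K : NNReal} (hE : LipschitzWith K E) {ρ : ℝ} (hρ : 0 < ρ)
    (hρβ : ρ ^ β = K + 1) :
    ContractingWith (K / (K + 1))
      ((expWeight ρ).symm ∘ picard hβ hT P₀ E ∘ expWeight ρ) := by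
  refine ⟨by rw [div_lt_one (by positivity)]; exact lt_add_one K,
    LipschitzWith.of_dist_le_mul fun f g => ?_⟩
  refine (ContinuousMap.dist_le (by positivity)).2 fun t => ?_
  have hfg : ∀ s, ‖expWeight ρ f s - expWeight ρ g s‖ ≤ dist f g * Real.exp (ρ * s) := by
    intro s
    change ‖Real.exp (ρ * s) • f s - Real.exp (ρ * s) • g s‖ ≤ _
    rw [← smul_sub, norm_smul, Real.norm_of_nonneg (Real.exp_pos _).le, mul_comm,
      ← dist_eq_norm]
    exact mul_le_mul_of_nonneg_right (ContinuousMap.dist_apply_le_dist s) (Real.exp_pos _).le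
  rw [dist_eq_norm]
  change ‖Real.exp (-(ρ * t)) • picard hβ hT P₀ E (expWeight ρ f) t -
    Real.exp (-(ρ * t)) • picard hβ hT P₀ E (expWeight ρ g) t‖ ≤ _
  rw [← smul_sub, norm_smul, Real.norm_of_nonneg (Real.exp_pos _).le]
  calc Real.exp (-(ρ * t)) * ‖picard hβ hT P₀ E (expWeight ρ f) t -
        picard hβ hT P₀ E (expWeight ρ g) t‖
      ≤ Real.exp (-(ρ * t)) * (K * dist f g / ρ ^ β * Real.exp (ρ * t)) :=
        mul_le_mul_of_nonneg_left (norm_picard_sub_le hβ hT P₀ hE hρ hfg t) (Real.exp_pos _).le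
    _ = ↑(K / (K + 1)) * dist f g := by
        rw [hρβ, NNReal.coe_div, NNReal.coe_add, NNReal.coe_one, Real.exp_neg]
        field_simp

theorem existsUnique_picard_eq_self [CompleteSpace F] {K : NNReal} (hE : LipschitzWith K E) :
    ∃! f, picard hβ hT P₀ E f = f := by
  set ρ := ((K : ℝ) + 1) ^ β⁻¹
  have hρ : 0 < ρ := by positivity
  have hρβ : ρ ^ β = K + 1 := by
    rw [← Real.rpow_mul (by positivity), inv_mul_cancel₀ hβ.ne', Real.rpow_one]
  exact ContractingWith.existsUnique_isFixedPt_of_conj _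
    (contractingWith_picard_conj hβ hT P₀ hE hρ hρβ)

end Picard

def IsIntegralSolution (β T : ℝ) (P₀ : F) (E : F → F) (P : ℝ → F) : Prop :=
  ContinuousOn P (Icc 0 T) ∧ ∀ t ∈ Icc 0 T, P t = P₀ + riemannLiouville β (E ∘ P) t

theorem existsUnique_isIntegralSolution [CompleteSpace F] (hβ : 0 < β) (hT : 0 ≤ T) (P₀ : F)
    {E : F → F} {K : NNReal} (hE : LipschitzWith K E) :
    ∃ P : ℝ → F, IsIntegralSolution β T P₀ E P ∧
      ∀ Q, IsIntegralSolution β T P₀ E Q → EqOn Q P (Icc 0 T) := by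
  set E' : C(F, F) := ⟨E, hE.continuous⟩
  have hsolve : ∀ (f : C(Icc 0 T, F)) (Q : ℝ → F), EqOn (IccExtend hT f) Q (Icc 0 T) →
      ∀ t : Icc 0 T, picard hβ hT P₀ E' f t = P₀ + riemannLiouville β (E ∘ Q) t :=
    fun f Q hQ => picard_apply_of_eqOn hβ hT P₀ hQ
  obtain ⟨f, hf, huniq⟩ := existsUnique_picard_eq_self hβ hT P₀ (E := E') hE
  refine ⟨IccExtend hT f, ⟨f.continuous.Icc_extend'.continuousOn, fun t ht => ?_⟩,
    fun Q ⟨hQc, hQ⟩ t ht => ?_⟩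
  · rw [IccExtend_of_mem hT _ ht, ← hsolve f _ (fun _ _ => rfl) ⟨t, ht⟩, hf]
  · let q : C(Icc 0 T, F) := ⟨(Icc 0 T).domRestrict Q, hQc.domRestrict⟩
    have hq : picard hβ hT P₀ E' q = q := by
      ext s : 1
      rw [hsolve q Q fun r hr => IccExtend_of_mem hT _ hr, ← hQ s s.2]
      rfl
    rw [IccExtend_of_mem hT _ ht, ← huniq q hq]
    rfl

end FractionalIntegral

open FractionalIntegral in
/-- **Existence and uniqueness of the equilibrium trajectory of the fractional
evolutionary game.** If `E` is Lipschitz, there is exactly one continuous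
`P : [0,T] → ℝⁿ` with `P(t) = P⁰ + (1/Γ(β)) ∫₀ᵗ (t−s)^{β−1} E(P(s)) ds`
for all `t ∈ [0,T]`. -/
theorem stmt_9 (n : ℕ) (β T : ℝ) (hβ : 0 < β) (hT : 0 < T)
    (P0 : Fin n → ℝ) (E : (Fin n → ℝ) → Fin n → ℝ)
    (K : NNReal) (hE : LipschitzWith K E) :
    ∃ P : ℝ → Fin n → ℝ,
      (ContinuousOn P (Set.Icc (0:ℝ) T) ∧
        ∀ t ∈ Set.Icc (0:ℝ) T, ∀ i, P t i = P0 i + (1 / Real.Gamma β) *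
          ∫ s in (0:ℝ)..t, (t - s) ^ (β - 1) * E (P s) i) ∧
      ∀ Q : ℝ → Fin n → ℝ,
        (ContinuousOn Q (Set.Icc (0:ℝ) T) ∧
          ∀ t ∈ Set.Icc (0:ℝ) T, ∀ i, Q t i = P0 i + (1 / Real.Gamma β) *
            ∫ s in (0:ℝ)..t, (t - s) ^ (β - 1) * E (Q s) i) →
        ∀ t ∈ Set.Icc (0:ℝ) T, Q t = P t := by
  have hcoord : ∀ Q : ℝ → Fin n → ℝ, ContinuousOn Q (Icc 0 T) →
      ((∀ t ∈ Icc (0:ℝ) T, ∀ i, Q t i = P0 i + (1 / Real.Gamma β) *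
          ∫ s in (0:ℝ)..t, (t - s) ^ (β - 1) * E (Q s) i) ↔
        ∀ t ∈ Icc 0 T, Q t = P0 + riemannLiouville β (E ∘ Q) t) := by
    refine fun Q hQ => forall₂_congr fun t ht => ?_
    rw [funext_iff]
    have hEQ : ContinuousOn (E ∘ Q) (Icc 0 t) :=
      hE.continuous.comp_continuousOn (hQ.mono (Icc_subset_Icc_right ht.2))
    simp only [Pi.add_apply, riemannLiouville_apply hβ ht.1 hEQ, Function.comp_apply, one_div]
  obtain ⟨P, ⟨hPc, hP⟩, huniq⟩ := existsUnique_isIntegralSolution hβ hT.le P0 hE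
  exact ⟨P, ⟨hPc, (hcoord P hPc).2 hP⟩,
    fun Q ⟨hQc, hQ⟩ => huniq Q ⟨hQc, (hcoord Q hQc).1 hQ⟩⟩
end

section
/- Let α ∈ (0,1), T > 0, and let g : [0,T] → ℝ be continuously differentiable. Then for every t ∈ (0,T], the function h(t) = ∫₀ᵗ (t−τ)^{−α} g(τ) dτ is differentiable at t with h'(t) = t^{−α} g(0) + ∫₀ᵗ (t−τ)^{−α} g'(τ) dτ. -/
/-!
Integrating by parts moves the derivative onto `g`:
`h(t) = K(t) g(0) + ∫₀ᵗ K(t−τ) g'(τ) dτ` with `K(u) = u^{1−α}/(1−α)` the primitive of the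
kernel, which is continuous and vanishes at `0`. By Fubini on the triangle `0 < τ < s < t`,
the last integral is `∫₀ᵗ ψ(s) ds` where `ψ(s) = ∫₀ˢ (s−τ)^{−α} g'(τ) dτ`. Rescaling `τ = s v`
writes `ψ(s)` as `s^{1−α}` times an integral over `[0,1]` with a fixed integrable dominating
function, so `ψ` is continuous and the fundamental theorem of calculus applies.
-/

open MeasureTheory Set

noncomputable def abelIntegral (α : ℝ) (f : ℝ → ℝ) (t : ℝ) : ℝ :=
  ∫ τ in (0:ℝ)..t, (t - τ) ^ (-α) * f τ

noncomputable def kernelPrimitive (α u : ℝ) : ℝ := u ^ (1 - α) / (1 - α)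

-- The `if` is needed: `Real.rpow` does not vanish at negative bases.
noncomputable def abelKernel (α τ s : ℝ) : ℝ := if τ < s then (s - τ) ^ (-α) else 0

section

variable {α : ℝ}

theorem continuous_kernelPrimitive (hα : α < 1) : Continuous (kernelPrimitive α) :=
  (Real.continuous_rpow_const (by linarith)).div_const _

theorem kernelPrimitive_zero (hα : α < 1) : kernelPrimitive α 0 = 0 := by
  simp [kernelPrimitive, Real.zero_rpow (by linarith : 1 - α ≠ 0)]

theorem kernelPrimitive_nonneg (hα : α < 1) {u : ℝ} (hu : 0 ≤ u) : 0 ≤ kernelPrimitive α u :=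
  div_nonneg (Real.rpow_nonneg hu _) (by linarith)

theorem hasDerivAt_kernelPrimitive (hα : α < 1) {u : ℝ} (hu : u ≠ 0) :
    HasDerivAt (kernelPrimitive α) (u ^ (-α)) u := by
  have h := (Real.hasDerivAt_rpow_const (p := 1 - α) (Or.inl hu)).div_const (1 - α)
  rwa [sub_sub_cancel_left, mul_div_cancel_left₀ _ (by linarith : (1:ℝ) - α ≠ 0)] at h

theorem integral_sub_rpow_neg_eq_kernelPrimitive (hα : α < 1) (τ t : ℝ) :
    ∫ s in τ..t, (s - τ) ^ (-α) = kernelPrimitive α (t - τ) := by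
  rw [intervalIntegral.integral_comp_sub_right (fun x => x ^ (-α)), sub_self,
    integral_rpow (Or.inl (by linarith)), Real.zero_rpow (by linarith), neg_add_eq_sub]
  simp [kernelPrimitive]

theorem intervalIntegrable_sub_const_rpow_neg (hα : α < 1) (c a b : ℝ) :
    IntervalIntegrable (fun s => (s - c) ^ (-α)) volume a b := by
  simpa using (intervalIntegral.intervalIntegrable_rpow' (a := a - c) (b := b - c)
    (by linarith : (-1:ℝ) < -α)).comp_sub_right c

theorem intervalIntegrable_const_sub_rpow_neg (hα : α < 1) (c a b : ℝ) :
    IntervalIntegrable (fun s => (c - s) ^ (-α)) volume a b := by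
  simpa using (intervalIntegral.intervalIntegrable_rpow' (a := c - a) (b := c - b)
    (by linarith : (-1:ℝ) < -α)).comp_sub_left c

theorem abelIntegral_eq_kernelPrimitive_mul_add (hα : α < 1) {g g' : ℝ → ℝ} {s : ℝ}
    (hs : 0 ≤ s) (hg : ContinuousOn g (Icc 0 s))
    (hgg' : ∀ x ∈ Ioo 0 s, HasDerivWithinAt g (g' x) (Ioi x) x)
    (hg' : IntervalIntegrable g' volume 0 s) :
    abelIntegral α g s =
      kernelPrimitive α s * g 0 + ∫ τ in 0..s, kernelPrimitive α (s - τ) * g' τ := by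
  have hK : Continuous fun τ => -kernelPrimitive α (s - τ) :=
    ((continuous_kernelPrimitive hα).comp (continuous_sub_left s)).neg
  have hKK' (x : ℝ) (hx : x ∈ Ioo 0 s) :
      HasDerivAt (fun τ => -kernelPrimitive α (s - τ)) ((s - x) ^ (-α)) x := by
    have h := ((hasDerivAt_kernelPrimitive hα (sub_pos.2 hx.2).ne').comp x
      ((hasDerivAt_id x).const_sub s)).fun_neg
    simpa only [mul_neg, mul_one, neg_neg, Function.comp_def] using h
  have hibp := intervalIntegral.integral_mul_deriv_eq_deriv_mul_of_hasDeriv_right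
    (hg.mono (uIcc_of_le hs).le) hK.continuousOn
    (by rwa [min_eq_left hs, max_eq_right hs])
    (by rw [min_eq_left hs, max_eq_right hs]; exact fun x hx => (hKK' x hx).hasDerivWithinAt)
    hg' (intervalIntegrable_const_sub_rpow_neg hα s 0 s)
  simp only [sub_self, sub_zero, kernelPrimitive_zero hα, neg_zero, mul_zero, mul_neg,
    intervalIntegral.integral_neg] at hibp
  simp only [abelIntegral, mul_comm _ (g _), mul_comm _ (g' _)]
  linarith

theorem abelIntegral_eq_rpow_mul_integral (hα : α < 1) (f : ℝ → ℝ) {s : ℝ} (hs : 0 ≤ s) :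
    abelIntegral α f s = s ^ (1 - α) * ∫ v in 0..1, (1 - v) ^ (-α) * f (s * v) := by
  have hscale := intervalIntegral.smul_integral_comp_mul_left (E := ℝ) (a := 0) (b := 1)
    (fun τ : ℝ => (s - τ) ^ (-α) * f τ) s
  simp only [mul_zero, mul_one, smul_eq_mul] at hscale
  have hpow : s ^ (1 - α) = s * s ^ (-α) := by
    rw [sub_eq_add_neg, Real.rpow_add' hs (by linarith), Real.rpow_one]
  rw [abelIntegral, ← hscale, hpow, mul_assoc, ← intervalIntegral.integral_const_mul (s ^ (-α))]
  congr 1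
  refine intervalIntegral.integral_congr fun v hv => ?_
  rw [uIcc_of_le zero_le_one] at hv
  rw [← mul_assoc, ← Real.mul_rpow hs (sub_nonneg.2 hv.2), mul_one_sub]

theorem continuousOn_abelIntegral (hα : α < 1) {f : ℝ → ℝ} {T : ℝ}
    (hf : ContinuousOn f (Icc 0 T)) : ContinuousOn (abelIntegral α f) (Icc 0 T) := by
  obtain ⟨M, hM⟩ := isCompact_Icc.exists_bound_of_continuousOn hf
  have hmem {s v : ℝ} (hs : s ∈ Icc 0 T) (hv : v ∈ Icc (0:ℝ) 1) : s * v ∈ Icc 0 T :=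
    ⟨mul_nonneg hs.1 hv.1, (mul_le_of_le_one_right hs.1 hv.2).trans hs.2⟩
  have hΦ : ContinuousOn (fun s => ∫ v in 0..1, (1 - v) ^ (-α) * f (s * v)) (Icc 0 T) := by
    intro s₀ hs₀
    refine intervalIntegral.continuousWithinAt_of_dominated_interval
      (bound := fun v => (1 - v) ^ (-α) * M) ?_ ?_
      ((intervalIntegrable_const_sub_rpow_neg hα 1 0 1).mul_const M) ?_
    · filter_upwards [self_mem_nhdsWithin] with s hs
      rw [uIoc_of_le zero_le_one]
      refine ((measurable_const.sub measurable_id).pow_const (-α)).aestronglyMeasurable.mul ?_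
      exact ((hf.comp (continuousOn_const.mul continuousOn_id) fun v hv => hmem hs hv).mono
        Ioc_subset_Icc_self).aestronglyMeasurable measurableSet_Ioc
    · filter_upwards [self_mem_nhdsWithin] with s hs
      refine ae_of_all _ fun v hv => ?_
      rw [uIoc_of_le zero_le_one] at hv
      have hk : 0 ≤ (1 - v) ^ (-α) := Real.rpow_nonneg (sub_nonneg.2 hv.2) _
      rw [norm_mul, Real.norm_of_nonneg hk]
      exact mul_le_mul_of_nonneg_left (hM _ (hmem hs (Ioc_subset_Icc_self hv))) hk
    · refine ae_of_all _ fun v hv => ?_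
      rw [uIoc_of_le zero_le_one] at hv
      exact continuousWithinAt_const.mul ((hf _ (hmem hs₀ (Ioc_subset_Icc_self hv))).comp
        (f := fun s => s * v) (continuousWithinAt_id.mul_const v)
        fun s hs => hmem hs (Ioc_subset_Icc_self hv))
  exact ((Real.continuous_rpow_const (by linarith)).continuousOn.mul hΦ).congr
    fun s hs => abelIntegral_eq_rpow_mul_integral hα f hs.1

theorem abelKernel_nonneg (τ s : ℝ) : 0 ≤ abelKernel α τ s := by
  unfold abelKernel
  split_ifs with h
  · exact Real.rpow_nonneg (sub_nonneg.2 h.le) _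
  · exact le_rfl

theorem measurable_abelKernel : Measurable (Function.uncurry (abelKernel α)) :=
  Measurable.ite (measurableSet_lt measurable_fst measurable_snd)
    ((measurable_snd.sub measurable_fst).pow_const _) measurable_const

theorem abelKernel_eq_indicator (τ : ℝ) :
    abelKernel α τ = (Ioi τ).indicator fun s => (s - τ) ^ (-α) := by
  ext s
  simp [abelKernel, indicator_apply]

theorem restrict_Ioc_restrict_Ioi {τ t : ℝ} (hτ : 0 ≤ τ) :
    (volume.restrict (Ioc 0 t)).restrict (Ioi τ) = volume.restrict (Ioc τ t) := by
  rw [Measure.restrict_restrict measurableSet_Ioi, inter_comm, Ioc_inter_Ioi, max_eq_right hτ]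

theorem integrableOn_abelKernel (hα : α < 1) {τ t : ℝ} (hτ : 0 ≤ τ) :
    IntegrableOn (abelKernel α τ) (Ioc 0 t) := by
  rw [IntegrableOn, abelKernel_eq_indicator, integrable_indicator_iff measurableSet_Ioi,
    IntegrableOn, restrict_Ioc_restrict_Ioi hτ]
  exact (intervalIntegrable_sub_const_rpow_neg hα τ τ t).1

theorem integral_abelKernel (hα : α < 1) {τ t : ℝ} (hτ : τ ∈ Icc 0 t) :
    ∫ s in Ioc 0 t, abelKernel α τ s = kernelPrimitive α (t - τ) := by
  rw [abelKernel_eq_indicator, integral_indicator measurableSet_Ioi,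
    restrict_Ioc_restrict_Ioi hτ.1, ← intervalIntegral.integral_of_le hτ.2,
    integral_sub_rpow_neg_eq_kernelPrimitive hα]

theorem integral_abelKernel_mul_eq_abelIntegral {s t : ℝ} (hs : s ∈ Ioc 0 t) (φ : ℝ → ℝ) :
    ∫ τ in Ioc 0 t, abelKernel α τ s * φ τ = abelIntegral α φ s := by
  have hcol : (fun τ => abelKernel α τ s * φ τ) =
      (Iio s).indicator fun τ => (s - τ) ^ (-α) * φ τ := by
    ext τ
    simp [abelKernel, indicator_apply, ite_mul]
  have hset : Iio s ∩ Ioc 0 t = Ioo 0 s := by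
    ext τ
    simp only [mem_inter_iff, mem_Iio, mem_Ioc, mem_Ioo]
    exact ⟨fun h => ⟨h.2.1, h.1⟩, fun h => ⟨h.2, h.1, h.2.le.trans hs.2⟩⟩
  rw [hcol, integral_indicator measurableSet_Iio, Measure.restrict_restrict measurableSet_Iio,
    hset, ← integral_Ioc_eq_integral_Ioo, ← intervalIntegral.integral_of_le hs.1.le,
    abelIntegral]

theorem integral_kernelPrimitive_mul_eq_integral_abelIntegral (hα : α < 1) {f : ℝ → ℝ}
    {t : ℝ} (ht : 0 ≤ t) (hf : ContinuousOn f (Icc 0 t)) :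
    ∫ τ in 0..t, kernelPrimitive α (t - τ) * f τ = ∫ s in 0..t, abelIntegral α f s := by
  set μ := volume.restrict (Ioc (0:ℝ) t)
  have hKf : Integrable (fun τ => kernelPrimitive α (t - τ) * f τ) μ :=
    ((((continuous_kernelPrimitive hα).comp (continuous_sub_left t)).continuousOn.mul
      hf).integrableOn_Icc).mono_set Ioc_subset_Icc_self
  have hf_meas : AEStronglyMeasurable f μ :=
    (hf.mono Ioc_subset_Icc_self).aestronglyMeasurable measurableSet_Ioc
  have hF_meas : AEStronglyMeasurable
      (Function.uncurry fun τ s => abelKernel α τ s * f τ) (μ.prod μ) :=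
    measurable_abelKernel.aestronglyMeasurable.mul
      (hf_meas.comp_quasiMeasurePreserving Measure.quasiMeasurePreserving_fst)
  have hF : Integrable (Function.uncurry fun τ s => abelKernel α τ s * f τ) (μ.prod μ) := by
    refine (integrable_prod_iff hF_meas).2 ⟨?_, hKf.norm.congr ?_⟩
    · filter_upwards [ae_restrict_mem measurableSet_Ioc] with τ hτ
      exact (integrableOn_abelKernel hα hτ.1.le).mul_const (f τ)
    · filter_upwards [ae_restrict_mem measurableSet_Ioc] with τ hτ
      simp only [Function.uncurry_apply_pair, norm_mul, Real.norm_of_nonneg (abelKernel_nonneg _ _)]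
      rw [integral_mul_const, integral_abelKernel hα (Ioc_subset_Icc_self hτ),
        Real.norm_of_nonneg (kernelPrimitive_nonneg hα (sub_nonneg.2 hτ.2))]
  calc ∫ τ in 0..t, kernelPrimitive α (t - τ) * f τ
      = ∫ τ, ∫ s, abelKernel α τ s * f τ ∂μ ∂μ := by
        rw [intervalIntegral.integral_of_le ht]
        refine integral_congr_ae ?_
        filter_upwards [ae_restrict_mem measurableSet_Ioc] with τ hτ
        rw [integral_mul_const, integral_abelKernel hα (Ioc_subset_Icc_self hτ)]
    _ = ∫ s, ∫ τ, abelKernel α τ s * f τ ∂μ ∂μ := integral_integral_swap hF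
    _ = ∫ s in 0..t, abelIntegral α f s := by
        rw [intervalIntegral.integral_of_le ht]
        refine integral_congr_ae ?_
        filter_upwards [ae_restrict_mem measurableSet_Ioc] with s hs
        exact integral_abelKernel_mul_eq_abelIntegral hs f

end

theorem stmt_10_general (α T : ℝ) (hα : α ∈ Set.Ioo (0:ℝ) 1)
    (g g' : ℝ → ℝ)
    (hg : ∀ t ∈ Set.Icc (0:ℝ) T, HasDerivWithinAt g (g' t) (Set.Icc 0 T) t)
    (hg' : ContinuousOn g' (Set.Icc (0:ℝ) T)) :
    ∀ t ∈ Set.Ioc (0:ℝ) T,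
      HasDerivWithinAt (fun t' => ∫ τ in (0:ℝ)..t', (t' - τ) ^ (-α) * g τ)
        (t ^ (-α) * g 0 + ∫ τ in (0:ℝ)..t, (t - τ) ^ (-α) * g' τ)
        (Set.Icc 0 T) t := by
  intro t ht
  have hrepr : EqOn (abelIntegral α g)
      (fun s => kernelPrimitive α s * g 0 + ∫ r in 0..s, abelIntegral α g' r) (Icc 0 T) := by
    intro s hs
    have hsub : Icc 0 s ⊆ Icc 0 T := Icc_subset_Icc_right hs.2
    rw [abelIntegral_eq_kernelPrimitive_mul_add hα.2 hs.1
        (fun x hx => (hg x (hsub hx)).continuousWithinAt.mono hsub)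
        (fun x hx => ((hg x (hsub (Ioo_subset_Icc_self hx))).hasDerivAt
          (Icc_mem_nhds hx.1 (hx.2.trans_le hs.2))).hasDerivWithinAt)
        ((hg'.mono hsub).intervalIntegrable_of_Icc hs.1),
      integral_kernelPrimitive_mul_eq_integral_abelIntegral hα.2 hs.1 (hg'.mono hsub)]
  have htT : t ∈ Icc 0 T := Ioc_subset_Icc_self ht
  have hψ := continuousOn_abelIntegral hα.2 hg'
  have := Fact.mk htT
  have hFTC : HasDerivWithinAt (fun s => ∫ r in 0..s, abelIntegral α g' r)
      (abelIntegral α g' t) (Icc 0 T) t :=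
    intervalIntegral.integral_hasDerivWithinAt_right
      ((hψ.mono (Icc_subset_Icc_right ht.2)).intervalIntegrable_of_Icc ht.1.le)
      (hψ.stronglyMeasurableAtFilter_nhdsWithin measurableSet_Icc t) (hψ t htT)
  exact (((hasDerivAt_kernelPrimitive hα.2 ht.1.ne').mul_const (g 0)).hasDerivWithinAt.add
    hFTC).congr hrepr (hrepr htT)

/-- **Leibniz rule for convolution with the weakly singular kernel
`(t−τ)^{−α}`.** For `α ∈ (0,1)` and continuously differentiable
`g : [0,T] → ℝ`, the function `h(t) = ∫₀ᵗ (t−τ)^{−α} g(τ) dτ` is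
differentiable at every `t ∈ (0,T]` with
`h'(t) = t^{−α} g(0) + ∫₀ᵗ (t−τ)^{−α} g'(τ) dτ`. -/
theorem stmt_10 (α T : ℝ) (hα : α ∈ Set.Ioo (0:ℝ) 1) (hT : 0 < T)
    (g g' : ℝ → ℝ)
    (hg : ∀ t ∈ Set.Icc (0:ℝ) T, HasDerivWithinAt g (g' t) (Set.Icc 0 T) t)
    (hg' : ContinuousOn g' (Set.Icc (0:ℝ) T)) :
    ∀ t ∈ Set.Ioc (0:ℝ) T,
      HasDerivWithinAt (fun t' => ∫ τ in (0:ℝ)..t', (t' - τ) ^ (-α) * g τ)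
        (t ^ (-α) * g 0 + ∫ τ in (0:ℝ)..t, (t - τ) ^ (-α) * g' τ)
        (Set.Icc 0 T) t :=
  stmt_10_general α T hα g g' hg hg'
end
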